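/- arXiv:1008.1458 — 9 statements merged into one kernel-verified Lean document; each statement's English description precedes it below -/
import Mathlib

section
/- Let k be a positive integer and v = (v₁,…,v_k) a vector of irrational real numbers. Then there exist an integer A with ⌊(k+1)/2⌋ ≤ A ≤ k and a subset P of {1,…,k} with exactly A elements such that for every positive integer n and every ε > 0 there exist infinitely many even positive integers T₁ that are multiples of n satisfying {T₁·v_i} > 1−ε for all i ∈ P and {T₁·v_j} < ε for all j ∈ {1,…,k}∖P, and also infinitely many even positive integers T₂ that are multiples of n satisfying {T₂·v_i} < ε for all i ∈ P and {T₂·v_j} > 1−ε for all j ∈ {1,…,k}∖P. -/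
/-- Simultaneous Dirichlet approximation. -/
lemma dirichlet {k : ℕ} (u : Fin k → ℝ) {ε : ℝ} (hε : 0 < ε) :
    ∃ T : ℕ, 0 < T ∧ ∀ i, ∃ m : ℤ, |(T : ℝ) * u i - m| < ε := by
  obtain ⟨N, hN⟩ := exists_nat_gt (1 / ε)
  have hN0 : 0 < N := by
    by_contra h
    push_neg at h
    interval_cases N
    simp at hN
    nlinarith [one_div_pos.mpr hε]
  have hNR : (0:ℝ) < N := by exact_mod_cast hN0
  have h1N : 1 / (N : ℝ) < ε := by
    rw [div_lt_iff₀ hNR]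
    rw [div_lt_iff₀ hε] at hN
    nlinarith
  set f : Fin (N ^ k + 1) → (Fin k → Fin N) := fun T i =>
    ⟨(⌊(N : ℝ) * Int.fract ((T : ℝ) * u i)⌋).toNat, by
      have h0 : (0:ℝ) ≤ (N : ℝ) * Int.fract ((T : ℝ) * u i) :=
        mul_nonneg hNR.le (Int.fract_nonneg _)
      have h1 : ⌊(N : ℝ) * Int.fract ((T : ℝ) * u i)⌋ < (N : ℤ) := by
        rw [Int.floor_lt]
        push_cast
        nlinarith [Int.fract_lt_one ((T : ℝ) * u i)]
      rw [Int.toNat_lt (Int.floor_nonneg.mpr h0)]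
      exact h1⟩ with hf
  obtain ⟨a, b, hab, hfab⟩ := Fintype.exists_ne_map_eq_of_card_lt f (by
    simp [Fintype.card_fun])
  obtain ⟨c, d, hcd, hfcd⟩ : ∃ c d : Fin (N ^ k + 1), c < d ∧ f c = f d := by
    rcases hab.lt_or_gt with h | h
    exacts [⟨a, b, h, hfab⟩, ⟨b, a, h, hfab.symm⟩]
  have hcd' : (c : ℕ) < (d : ℕ) := hcd
  refine ⟨(d : ℕ) - (c : ℕ), by omega, fun i => ?_⟩
  set x := ((c : ℕ) : ℝ) * u i with hx
  set y := ((d : ℕ) : ℝ) * u i with hy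
  have hfloor : ⌊(N : ℝ) * Int.fract x⌋ = ⌊(N : ℝ) * Int.fract y⌋ := by
    have h1 := congrFun hfcd i
    rw [hf] at h1
    simp only [Fin.mk.injEq] at h1
    rw [← hx, ← hy] at h1
    have h2 : (0:ℝ) ≤ (N : ℝ) * Int.fract x := mul_nonneg hNR.le (Int.fract_nonneg _)
    have h3 : (0:ℝ) ≤ (N : ℝ) * Int.fract y := mul_nonneg hNR.le (Int.fract_nonneg _)
    have := Int.floor_nonneg.mpr h2
    have := Int.floor_nonneg.mpr h3
    omega
  have hlt : |Int.fract y - Int.fract x| < 1 / (N : ℝ) := by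
    rw [abs_sub_lt_iff]
    have hinv : 1 / (N:ℝ) * N = 1 := by field_simp
    have l1 := Int.floor_le ((N : ℝ) * Int.fract x)
    have l2 := Int.lt_floor_add_one ((N : ℝ) * Int.fract x)
    have l3 := Int.floor_le ((N : ℝ) * Int.fract y)
    have l4 := Int.lt_floor_add_one ((N : ℝ) * Int.fract y)
    rw [hfloor] at l1 l2
    constructor <;> nlinarith
  refine ⟨⌊y⌋ - ⌊x⌋, ?_⟩
  have hcast : ((((d : ℕ) - (c : ℕ)) : ℕ) : ℝ) = ((d : ℕ) : ℝ) - ((c : ℕ) : ℝ) := by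
    push_cast [Nat.cast_sub hcd'.le]
    ring
  have key : (((d : ℕ) - (c : ℕ) : ℕ) : ℝ) * u i - ((⌊y⌋ : ℝ) - (⌊x⌋ : ℝ))
      = Int.fract y - Int.fract x := by
    rw [hcast]
    have e1 : Int.fract y = y - ⌊y⌋ := (Int.self_sub_floor y).symm
    have e2 : Int.fract x = x - ⌊x⌋ := (Int.self_sub_floor x).symm
    rw [e1, e2, hx, hy]
    ring
  push_cast
  rw [key]
  exact hlt.trans h1N

lemma fract_of_pos {x θ : ℝ} {mI : ℤ} (h : x - mI = θ) (h1 : 0 < θ) (h2 : θ < 1) :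
    Int.fract x = θ := by
  have e : Int.fract x = Int.fract θ := by rw [← h, Int.fract_sub_intCast]
  rw [e, Int.fract_eq_self.mpr ⟨h1.le, h2⟩]

lemma fract_of_neg {x θ : ℝ} {mI : ℤ} (h : x - mI = θ) (h1 : -1 < θ) (h2 : θ < 0) :
    Int.fract x = θ + 1 := by
  have e : Int.fract x = Int.fract θ := by rw [← h, Int.fract_sub_intCast]
  have hfl : ⌊θ⌋ = -1 := by
    rw [Int.floor_eq_iff]
    constructor <;> push_cast <;> linarith
  rw [e, ← Int.self_sub_floor, hfl]
  push_cast
  ring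

/-- Sign-flip lemma. -/
lemma flipSign {k : ℕ} (hk : 0 < k) (v : Fin k → ℝ) {T : ℕ} (hT : 0 < T)
    (mf : Fin k → ℤ) {ε : ℝ} (hε : ε ≤ 1 / 4)
    (hres : ∀ i, (T : ℝ) * v i - mf i ≠ 0 ∧ |(T : ℝ) * v i - mf i| < ε) :
    ∃ (T' : ℕ) (mf' : Fin k → ℤ), T ∣ T' ∧ T ≤ T' ∧ 0 < T' ∧
      ∀ i, ((T' : ℝ) * v i - mf' i ≠ 0 ∧ |(T' : ℝ) * v i - mf' i| < 2 * ε ∧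
        (0 < (T' : ℝ) * v i - mf' i ↔ (T : ℝ) * v i - mf i < 0)) := by
  haveI : Nonempty (Fin k) := ⟨⟨0, hk⟩⟩
  set θ : Fin k → ℝ := fun i => (T : ℝ) * v i - mf i with hθ
  have hεpos : 0 < ε := lt_of_le_of_lt (abs_nonneg _) (hres ⟨0, hk⟩).2
  set δ : ℝ := Finset.univ.inf' Finset.univ_nonempty (fun i => |θ i|) with hδ
  have hδpos : 0 < δ := by
    rw [hδ, Finset.lt_inf'_iff]
    exact fun i _ => abs_pos.mpr (hres i).1
  have hδle : ∀ i, δ ≤ |θ i| := fun i => Finset.inf'_le _ (Finset.mem_univ i)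
  have hδε : δ < ε := lt_of_le_of_lt (hδle ⟨0, hk⟩) (hres ⟨0, hk⟩).2
  obtain ⟨M, hM0, hMres⟩ := dirichlet (fun i => (T : ℝ) * v i) (half_pos hδpos)
  choose p hp using hMres
  have hM2 : 2 ≤ M := by
    by_contra h
    have hM1 : M = 1 := by omega
    subst hM1
    set i0 : Fin k := ⟨0, hk⟩
    have h1 := hp i0
    push_cast at h1
    rw [one_mul] at h1
    have h4 : (T : ℝ) * v i0 - mf i0 = θ i0 := rfl
    rcases eq_or_ne (p i0) (mf i0) with he | he
    · rw [he] at h1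
      rw [h4] at h1
      linarith [hδle i0]
    · have hq : (1 : ℝ) ≤ |((mf i0 - p i0 : ℤ) : ℝ)| := by
        exact_mod_cast Int.one_le_abs (sub_ne_zero.mpr (Ne.symm he))
      have hsplit : (T : ℝ) * v i0 - p i0 = θ i0 + ((mf i0 - p i0 : ℤ) : ℝ) := by
        push_cast
        rw [hθ]
        ring
      rw [hsplit] at h1
      have := abs_sub_abs_le_abs_sub ((mf i0 - p i0 : ℤ) : ℝ) (-(θ i0))
      rw [sub_neg_eq_add, abs_neg, add_comm] at this
      have hθb := (hres i0).2
      rw [h4] at hθb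
      linarith
  refine ⟨(M - 1) * T, fun i => p i - mf i, dvd_mul_left T (M-1),
    Nat.le_mul_of_pos_left T (by omega), Nat.mul_pos (by omega) hT, fun i => ?_⟩
  have hcast : (((M - 1) * T : ℕ) : ℝ) = ((M : ℝ) - 1) * T := by
    push_cast [Nat.cast_sub (by omega : 1 ≤ M)]
    ring
  have hkey : (((M - 1) * T : ℕ) : ℝ) * v i - ((p i - mf i : ℤ) : ℝ)
      = ((M : ℝ) * ((T : ℝ) * v i) - p i) - θ i := by
    rw [hcast, hθ]
    push_cast
    ring
  have hη := hp i
  have hθb := (hres i).2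
  have hθne := (hres i).1
  have hδi := hδle i
  have h4 : (T : ℝ) * v i - mf i = θ i := rfl
  rw [hkey]
  rw [h4] at hθb hθne ⊢
  rw [abs_lt] at hη hθb
  rcases hθne.lt_or_gt with hneg | hpos
  · rw [abs_of_neg hneg] at hδi
    have hpos' : 0 < (M : ℝ) * ((T : ℝ) * v i) - p i - θ i := by linarith
    exact ⟨ne_of_gt hpos', by rw [abs_lt]; constructor <;> linarith,
      iff_of_true hpos' hneg⟩
  · rw [abs_of_pos hpos] at hδi
    have hneg' : (M : ℝ) * ((T : ℝ) * v i) - p i - θ i < 0 := by linarith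
    exact ⟨ne_of_lt hneg', by rw [abs_lt]; constructor <;> linarith,
      iff_of_false (by linarith) (by linarith)⟩

lemma key {k : ℕ} (hk : 0 < k) (v : Fin k → ℝ) (hv : ∀ i, Irrational (v i)) :
    ∃ s : Fin k → Bool, ∀ n : ℕ, 0 < n → ∀ ε : ℝ, 0 < ε → ∀ b : Bool,
      {T : ℕ | 0 < T ∧ Even T ∧ n ∣ T ∧
        (∀ i, s i = b → Int.fract ((T : ℝ) * v i) < ε) ∧
        (∀ i, s i ≠ b → 1 - ε < Int.fract ((T : ℝ) * v i))}.Infinite := by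
  have hQ : ∀ m : ℕ, ∃ (T : ℕ) (mf : Fin k → ℤ), 0 < T ∧ Even T ∧
      (∀ n : ℕ, 0 < n → n ≤ m + 1 → n ∣ T) ∧ m < T ∧
      ∀ i, ((T : ℝ) * v i - mf i ≠ 0 ∧ |(T : ℝ) * v i - mf i| < 1 / (m + 2)) := by
    intro m
    set B := 2 * (m + 1).factorial with hB
    have hBpos : 0 < B := by positivity
    have hεm : (0 : ℝ) < 1 / (m + 2) := by positivity
    obtain ⟨T', hT', hres⟩ := dirichlet (fun i => (B : ℝ) * v i) hεm
    choose mf hmf using hres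
    have hBT : 0 < B * T' := Nat.mul_pos hBpos hT'
    refine ⟨B * T', mf, hBT, ⟨(m + 1).factorial * T', by rw [hB]; ring⟩,
      fun n hn hnm => Dvd.dvd.mul_right (Dvd.dvd.mul_left (Nat.dvd_factorial hn hnm) 2) T',
      ?_, fun i => ?_⟩
    · calc m < m + 1 := Nat.lt_succ_self m
        _ ≤ (m + 1).factorial := Nat.self_le_factorial _
        _ ≤ B := Nat.le_mul_of_pos_left _ (by norm_num)
        _ ≤ B * T' := Nat.le_mul_of_pos_right _ hT'
    · have hcast : ((B * T' : ℕ) : ℝ) * v i = (T' : ℝ) * ((B : ℝ) * v i) := by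
        push_cast
        ring
      constructor
      · rw [hcast]
        have h1 : Irrational (((B * T' : ℕ) : ℝ) * v i) := (hv i).natCast_mul hBT.ne'
        rw [hcast] at h1
        exact sub_ne_zero.mpr (h1.ne_int (mf i))
      · rw [hcast]
        exact hmf i
  choose T mf hT0 hTeven hTdvd hTgt hTres using hQ
  set g : ℕ → (Fin k → Bool) := fun m i => decide (0 < (T m : ℝ) * v i - mf m i) with hg
  obtain ⟨s, hs⟩ := Finite.exists_infinite_fiber g
  have hsI : (g ⁻¹' {s}).Infinite := Set.infinite_coe_iff.mp hs
  refine ⟨s, fun n hn ε hε b => ?_⟩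
  apply Set.infinite_of_forall_exists_gt
  intro R
  obtain ⟨c, hc⟩ := exists_nat_gt (2 / ε)
  obtain ⟨m, hm, hmgt⟩ := hsI.exists_gt (R + n + c + 2)
  have hgm : g m = s := hm
  have hsign : ∀ i, (s i = true → 0 < (T m : ℝ) * v i - mf m i) ∧
      (s i = false → (T m : ℝ) * v i - mf m i < 0) := by
    intro i
    have h1 : decide (0 < (T m : ℝ) * v i - mf m i) = s i := congrFun hgm i
    constructor
    · intro h2
      rw [h2] at h1
      exact of_decide_eq_true h1
    · intro h2
      rw [h2] at h1
      rcases (hTres m i).1.lt_or_gt with h | h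
      · exact h
      · exact absurd (decide_eq_true h) (by rw [h1]; simp)
  have hεm2 : (2 : ℝ) / (m + 2) < ε := by
    rw [div_lt_iff₀ (by positivity)]
    rw [div_lt_iff₀ hε] at hc
    have : (c : ℝ) ≤ m := by exact_mod_cast (by omega : c ≤ m)
    nlinarith
  have hεm1 : (1 : ℝ) / (m + 2) < ε := by
    rw [div_lt_iff₀ (by positivity)] at hεm2 ⊢
    linarith
  have hmb : (1 : ℝ) / (m + 2) ≤ 1 / 4 := by
    apply div_le_div_of_nonneg_left (by norm_num) (by norm_num)
    have : (2 : ℝ) ≤ m := by exact_mod_cast (by omega : 2 ≤ m)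
    linarith
  cases b with
  | true =>
    refine ⟨T m, ⟨hT0 m, hTeven m, hTdvd m n hn (by omega), fun i hib => ?_, fun i hib => ?_⟩, by
      calc R < m := by omega
        _ < T m := hTgt m⟩
    · have hb := (hTres m i).2
      rw [abs_lt] at hb
      have hpos := (hsign i).1 hib
      rw [fract_of_pos rfl hpos (by linarith [hmb])]
      linarith
    · have hb := (hTres m i).2
      rw [abs_lt] at hb
      have hneg := (hsign i).2 (by revert hib; cases s i <;> simp)
      rw [fract_of_neg rfl (by linarith [hmb]) hneg]
      linarith
  | false =>
    obtain ⟨T', mf', hdvd', hle', hpos', hres'⟩ :=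
      flipSign hk v (hT0 m) (mf m) hmb (hTres m)
    have hEven' : Even T' := by
      obtain ⟨c', hc'⟩ := hdvd'
      rw [hc']
      exact (hTeven m).mul_right c'
    have h2ε : 2 * ((1:ℝ) / (m + 2)) < ε := by
      rw [mul_one_div]
      exact hεm2
    refine ⟨T', ⟨hpos', hEven', (hTdvd m n hn (by omega)).trans hdvd', fun i hib => ?_, fun i hib => ?_⟩, by
      calc R < m := by omega
        _ < T m := hTgt m
        _ ≤ T' := hle'⟩
    · obtain ⟨hne', habs', hiff'⟩ := hres' i
      rw [abs_lt] at habs'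
      have hneg := (hsign i).2 hib
      have hpos2 : 0 < (T' : ℝ) * v i - mf' i := hiff'.mpr hneg
      rw [fract_of_pos rfl hpos2 (by linarith [hmb])]
      linarith
    · obtain ⟨hne', habs', hiff'⟩ := hres' i
      rw [abs_lt] at habs'
      have hposθ := (hsign i).1 (by revert hib; cases s i <;> simp)
      have hneg2 : (T' : ℝ) * v i - mf' i < 0 := by
        rcases hne'.lt_or_gt with h | h
        · exact h
        · exact absurd (hiff'.mp h) (by linarith)
      rw [fract_of_neg rfl (by linarith [hmb]) hneg2]
      linarith

/-- For irrational `v₁,…,v_k` there exist `A` with `⌊(k+1)/2⌋ ≤ A ≤ k`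
and a subset `P ⊆ {1,…,k}` of cardinality `A` such that for every `n ≥ 1` and `ε > 0`
there are infinitely many even positive multiples `T₁` of `n` with `{T₁ vᵢ} > 1 - ε`
for `i ∈ P` and `{T₁ vⱼ} < ε` for `j ∉ P`, and infinitely many even positive multiples
`T₂` of `n` with the roles of `P` and its complement reversed. -/
theorem stmt_1 (k : ℕ) (hk : 0 < k) (v : Fin k → ℝ) (hv : ∀ i, Irrational (v i)) :
    ∃ A : ℕ, (k + 1) / 2 ≤ A ∧ A ≤ k ∧
      ∃ P : Finset (Fin k), P.card = A ∧
        ∀ n : ℕ, 0 < n → ∀ ε : ℝ, 0 < ε →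
          {T : ℕ | 0 < T ∧ Even T ∧ n ∣ T ∧
              (∀ i ∈ P, 1 - ε < Int.fract ((T : ℝ) * v i)) ∧
              (∀ j, j ∉ P → Int.fract ((T : ℝ) * v j) < ε)}.Infinite ∧
          {T : ℕ | 0 < T ∧ Even T ∧ n ∣ T ∧
              (∀ i ∈ P, Int.fract ((T : ℝ) * v i) < ε) ∧
              (∀ j, j ∉ P → 1 - ε < Int.fract ((T : ℝ) * v j))}.Infinite := by
  obtain ⟨s, hs⟩ := key hk v hv
  classical
  set P0 : Finset (Fin k) := Finset.univ.filter (fun i => s i = false) with hP0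
  set P1 : Finset (Fin k) := Finset.univ.filter (fun i => s i = true) with hP1
  have hmem0 : ∀ i, i ∈ P0 ↔ s i = false := by intro i; simp [hP0]
  have hmem1 : ∀ i, i ∈ P1 ↔ s i = true := by intro i; simp [hP1]
  have hcards : P0.card + P1.card = k := by
    have h := Finset.card_filter_add_card_filter_not
      (s := (Finset.univ : Finset (Fin k))) (p := fun i => s i = false)
    have he : (Finset.univ.filter (fun i => ¬ s i = false)) = P1 := by
      apply Finset.ext
      intro i
      simp [hP1]
    rw [he] at h
    simpa using h
  have hle : P0.card ≤ k := by omega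
  have hle1 : P1.card ≤ k := by omega
  by_cases hA : (k + 1) / 2 ≤ P0.card
  · refine ⟨P0.card, hA, hle, P0, rfl, fun n hn ε hε => ?_⟩
    constructor
    · refine (hs n hn ε hε true).mono fun T hT => ?_
      obtain ⟨h1, h2, h3, h4, h5⟩ := hT
      refine ⟨h1, h2, h3, fun i hi => h5 i ?_, fun j hj => h4 j ?_⟩
      · rw [hmem0] at hi; simp [hi]
      · rw [hmem0] at hj; revert hj; cases s j <;> simp
    · refine (hs n hn ε hε false).mono fun T hT => ?_
      obtain ⟨h1, h2, h3, h4, h5⟩ := hT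
      refine ⟨h1, h2, h3, fun i hi => h4 i ((hmem0 i).mp hi), fun j hj => h5 j ?_⟩
      rw [hmem0] at hj; revert hj; cases s j <;> simp
  · refine ⟨P1.card, by omega, hle1, P1, rfl, fun n hn ε hε => ?_⟩
    constructor
    · refine (hs n hn ε hε false).mono fun T hT => ?_
      obtain ⟨h1, h2, h3, h4, h5⟩ := hT
      refine ⟨h1, h2, h3, fun i hi => h5 i ?_, fun j hj => h4 j ?_⟩
      · rw [hmem1] at hi; simp [hi]
      · rw [hmem1] at hj; revert hj; cases s j <;> simp
    · refine (hs n hn ε hε true).mono fun T hT => ?_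
      obtain ⟨h1, h2, h3, h4, h5⟩ := hT
      refine ⟨h1, h2, h3, fun i hi => h4 i ((hmem1 i).mp hi), fun j hj => h5 j ?_⟩
      rw [hmem1] at hj; revert hj; cases s j <;> simp
end

section
/- Let d ≥ 3 be an odd integer and define b : ℕ → ℕ by: b_j = 2 if j = m(d−1) for some integer m ≥ 2; b_j = 1 if j is even, j ≥ d−1, and j is not of the form m(d−1) with an integer m ≥ 2; and b_j = 0 otherwise. Then for every integer k ≥ d−1 one has ∑_{j=0}^{k} (−1)^j b_j = ∑_{0 ≤ 2j ≤ k} b_{2j} = k(d+1)/(2(d−1)) − (d−1)/2 − ({k/(d−1)} + {k/2}), as an identity of real numbers. -/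
private lemma evenSum' (g : ℕ → ℝ) (hg : ∀ j, ¬ Even j → g j = 0) :
    ∀ n : ℕ, ∑ j ∈ Finset.range n, g j = ∑ j ∈ Finset.range ((n+1)/2), g (2*j) := by
  intro n
  induction n with
  | zero => simp
  | succ n ih =>
    rw [Finset.sum_range_succ, ih]
    by_cases h : Even n
    · obtain ⟨m, hm⟩ := h
      have h1 : (n+1)/2 = m := by omega
      have h2 : (n+1+1)/2 = m + 1 := by omega
      rw [h1, h2, Finset.sum_range_succ]
      congr 2
      omega
    · have hodd : n % 2 = 1 := Nat.not_even_iff.mp h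
      have h2 : (n+1+1)/2 = (n+1)/2 := by omega
      rw [hg n h, add_zero, h2]

private lemma fract_nat_div' (a m : ℕ) (hm : 0 < m) :
    Int.fract ((a:ℝ)/(m:ℝ)) = ((a % m : ℕ):ℝ)/(m:ℝ) := by
  have hm' : (0:ℝ) < (m:ℝ) := by exact_mod_cast hm
  have hm0 : (m:ℝ) ≠ 0 := ne_of_gt hm'
  have h2 : (a:ℝ) = (m:ℝ) * ((a/m : ℕ):ℝ) + ((a % m : ℕ):ℝ) := by
    exact_mod_cast (Nat.div_add_mod a m).symm
  have hq : ((((a/m : ℕ) : ℤ)):ℝ) = ((a/m : ℕ):ℝ) := Int.cast_natCast _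
  have key : (a:ℝ)/(m:ℝ) - (((a/m : ℕ) : ℤ):ℝ) = ((a % m : ℕ):ℝ)/(m:ℝ) := by
    rw [hq, h2]; field_simp; ring
  rw [← Int.fract_sub_intCast ((a:ℝ)/(m:ℝ)) ((a/m : ℕ) : ℤ), key, Int.fract_eq_self.2]
  constructor
  · positivity
  · rw [div_lt_one hm']
    exact_mod_cast Nat.mod_lt a hm

private lemma key' (c : ℕ) (hc : 1 ≤ c) (B : ℕ → ℕ)
    (hB : ∀ j, B j = (if c ∣ j ∧ 2*c ≤ j then 1 else 0) + (if c ≤ j then 1 else 0)) :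
    ∀ k, 2*c ≤ k → (∑ j ∈ Finset.range (k/2+1), B j) + c = k/2 + k/(2*c) := by
  intro k hk
  induction k, hk using Nat.le_induction with
  | base =>
    have h1 : (2*c)/2 = c := by omega
    have h2 : (2*c)/(2*c) = 1 := Nat.div_self (by omega)
    have hz : ∑ j ∈ Finset.range c, B j = 0 := by
      apply Finset.sum_eq_zero
      intro j hj
      simp only [Finset.mem_range] at hj
      rw [hB, if_neg (by rintro ⟨_, h⟩; omega), if_neg (by omega)]
      omega
    rw [h1, h2, Finset.sum_range_succ, hz, hB c,
      if_neg (by rintro ⟨_, h⟩; omega), if_pos (le_refl c)]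
    omega
  | succ k hk ih =>
    have h3 : (k+1)/(2*c) = k/(2*c) + if (2*c) ∣ (k+1) then 1 else 0 := Nat.succ_div
    rcases Nat.even_or_odd k with he | ho
    · obtain ⟨m, hm⟩ := he
      have hndvd : ¬ (2*c) ∣ (k+1) := by
        rintro ⟨s, hs⟩
        have h5 : k + 1 = 2*(c*s) := by rw [hs]; ring
        omega
      rw [if_neg hndvd] at h3
      have h2 : (k+1)/2 = k/2 := by omega
      rw [h2, h3]
      omega
    · obtain ⟨m, hm⟩ := ho
      have h2 : (k+1)/2 = k/2 + 1 := by omega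
      rw [h2, Finset.sum_range_succ, hB (k/2+1),
        if_pos (show c ≤ k/2 + 1 by omega)]
      by_cases hd : (2*c) ∣ (k+1)
      · obtain ⟨s, hs⟩ := hd
        have h5 : k + 1 = 2*(c*s) := by rw [hs]; ring
        have hs2 : 2 ≤ s := by nlinarith
        have hcs : 2*c ≤ c*s := by nlinarith
        have hpos : c ∣ (k/2+1) ∧ 2*c ≤ k/2+1 := ⟨⟨s, by omega⟩, by omega⟩
        rw [if_pos ⟨s, hs⟩] at h3
        rw [if_pos hpos, h3]
        omega
      · have hneg : ¬ (c ∣ (k/2+1) ∧ 2*c ≤ k/2+1) := by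
          rintro ⟨⟨s, hs⟩, hle⟩
          refine hd ⟨s, ?_⟩
          have h5 : k + 1 = 2*(c*s) := by omega
          rw [h5]; ring
        rw [if_neg hd] at h3
        rw [if_neg hneg, h3]
        omega



open scoped Classical in
/-- For odd `d ≥ 3` and the Betti number sequence `b` of the free loop
space pair of `S^d`, for every `k ≥ d - 1` the alternating sum `∑_{j=0}^k (-1)^j b_j`
equals the sum of the even-indexed Betti numbers `∑_{0 ≤ 2j ≤ k} b_{2j}`, which equals
`k(d+1)/(2(d-1)) - (d-1)/2 - ({k/(d-1)} + {k/2})` as real numbers. -/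
theorem stmt_2 (d : ℕ) (hd : 3 ≤ d) (hodd : Odd d) (b : ℕ → ℕ)
    (hb : ∀ j : ℕ, b j =
      if ∃ m : ℕ, 2 ≤ m ∧ j = m * (d - 1) then 2
      else if Even j ∧ d - 1 ≤ j then 1
      else 0) :
    ∀ k : ℕ, d - 1 ≤ k →
      (∑ j ∈ Finset.range (k + 1), (-1 : ℝ) ^ j * (b j : ℝ)
          = ∑ j ∈ Finset.range (k / 2 + 1), (b (2 * j) : ℝ)) ∧
      (∑ j ∈ Finset.range (k / 2 + 1), (b (2 * j) : ℝ)
          = (k : ℝ) * ((d : ℝ) + 1) / (2 * ((d : ℝ) - 1)) - ((d : ℝ) - 1) / 2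
            - (Int.fract ((k : ℝ) / ((d : ℝ) - 1)) + Int.fract ((k : ℝ) / 2))) := by
  obtain ⟨t, hdt⟩ := hodd
  have ht1 : 1 ≤ t := by omega
  have hd1 : d - 1 = 2*t := by omega
  -- b vanishes on odd indices
  have hbodd : ∀ j, ¬ Even j → b j = 0 := by
    intro j hj
    rw [hb, if_neg, if_neg]
    · rintro ⟨hje, _⟩; exact hj hje
    · rintro ⟨m, hm, rfl⟩
      exact hj ⟨m*t, by rw [hd1]; ring⟩
  -- explicit form of b on even indices
  have hB2 : ∀ j, b (2*j) = (if t ∣ j ∧ 2*t ≤ j then 1 else 0) + (if t ≤ j then 1 else 0) := by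
    intro j
    rw [hb, hd1]
    by_cases h1 : t ∣ j ∧ 2*t ≤ j
    · obtain ⟨⟨s, hs⟩, hle⟩ := h1
      have hs2 : 2 ≤ s := by nlinarith
      rw [if_pos ⟨s, hs2, by rw [hs]; ring⟩,
        if_pos ⟨⟨s, hs⟩, hle⟩, if_pos (by omega)]
    · have h1' : ¬ ∃ m, 2 ≤ m ∧ 2*j = m*(2*t) := by
        rintro ⟨m, hm, hjm⟩
        have h5 : 2*j = 2*(t*m) := by rw [hjm]; ring
        have h6 : j = t*m := by omega
        have h7 : 2*t ≤ j := by nlinarith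
        exact h1 ⟨⟨m, h6⟩, h7⟩
      rw [if_neg h1', if_neg h1]
      by_cases h2 : t ≤ j
      · rw [if_pos ⟨even_two_mul j, by omega⟩, if_pos h2]
      · rw [if_neg (by rintro ⟨_, hh⟩; omega), if_neg h2]
  intro k hk
  have hk' : 2*t ≤ k := by omega
  constructor
  · have hev := evenSum' (fun j => (-1:ℝ)^j * (b j : ℝ))
      (fun j hj => by simp [hbodd j hj]) (k+1)
    have h2 : (k+1+1)/2 = k/2 + 1 := by omega
    rw [h2] at hev
    rw [hev]
    refine Finset.sum_congr rfl fun j _ => ?_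
    simp [pow_mul]
  · have hkey := key' t ht1 (fun j => b (2*j)) hB2 k hk'
    have h2t0 : (0:ℝ) < ((2*t : ℕ):ℝ) := by exact_mod_cast (by omega : 0 < 2*t)
    have f1 : Int.fract ((k:ℝ) / ((d:ℝ) - 1)) = ((k % (2*t) : ℕ):ℝ)/(((2*t:ℕ)):ℝ) := by
      have hcast : (d:ℝ) - 1 = ((2*t : ℕ):ℝ) := by
        have : (d:ℝ) = ((2*t+1 : ℕ):ℝ) := by exact_mod_cast congrArg (Nat.cast : ℕ → ℝ) (by omega : d = 2*t+1)
        rw [this]; push_cast; ring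
      rw [hcast, fract_nat_div' k (2*t) (by omega)]
    have f2 : Int.fract ((k:ℝ) / 2) = ((k % 2 : ℕ):ℝ)/2 := by
      have h := fract_nat_div' k 2 (by omega)
      norm_num at h
      convert h using 2 <;> norm_num
    rw [f1, f2]
    -- real-number bookkeeping
    have hS : (∑ j ∈ Finset.range (k/2+1), (b (2*j) : ℝ))
        = ((∑ j ∈ Finset.range (k/2+1), b (2*j) : ℕ) : ℝ) := by push_cast; rfl
    rw [hS]
    have hkeyR : ((∑ j ∈ Finset.range (k/2+1), b (2*j) : ℕ) : ℝ) + (t:ℝ)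
        = ((k/2 : ℕ):ℝ) + ((k/(2*t) : ℕ):ℝ) := by exact_mod_cast congrArg (Nat.cast : ℕ → ℝ) hkey
    have e1 : (k:ℝ) = ((2*t:ℕ):ℝ) * ((k/(2*t) : ℕ):ℝ) + ((k % (2*t) : ℕ):ℝ) := by
      exact_mod_cast (Nat.div_add_mod k (2*t)).symm
    have e2 : (k:ℝ) = 2 * ((k/2 : ℕ):ℝ) + ((k % 2 : ℕ):ℝ) := by
      exact_mod_cast (Nat.div_add_mod k 2).symm
    have hdR : (d:ℝ) = ((2*t:ℕ):ℝ) + 1 := by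
      exact_mod_cast congrArg (Nat.cast : ℕ → ℝ) (by omega : d = 2*t+1)
    have htR : ((2*t:ℕ):ℝ) = 2*(t:ℝ) := by push_cast; ring
    have h2t0' : ((2*t:ℕ):ℝ) ≠ 0 := ne_of_gt h2t0
    rw [hdR]
    have g0 : ((2*t:ℕ):ℝ) + 1 - 1 = ((2*t:ℕ):ℝ) := by ring
    rw [g0, htR] at *
    have ht0 : (t:ℝ) ≠ 0 := by
      have : (0:ℝ) < (t:ℝ) := by exact_mod_cast ht1
      exact ne_of_gt this
    have g1 : (k:ℝ) * (2*(t:ℝ) + 1 + 1) / (2 * (2*(t:ℝ)))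
        = ((k/2 : ℕ):ℝ) + ((k % 2 : ℕ):ℝ)/2 + ((k/(2*t) : ℕ):ℝ)
          + ((k % (2*t) : ℕ):ℝ)/(2*(t:ℝ)) := by
      field_simp
      push_cast at e1
      linear_combination 2*(t:ℝ) * e2 + 2 * e1
    rw [g1]
    linarith [hkeyR]
end

section
/- Let d ≥ 3 be an odd integer. For every integer k ≥ d−1, the quantity ε_{d,1}(k) := {k/(d−1)} + {k/2} satisfies 0 ≤ ε_{d,1}(k) < 3/2 − 1/(2(d−1)); consequently, with b_j as defined below, ∑_{j=0}^{k} (−1)^j b_j ≤ k(d+1)/(2(d−1)) − (d−1)/2 for every integer k ≥ d−1. -/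
open scoped Classical in
/-- For odd `d ≥ 3` and every `k ≥ d - 1`, the error term
`ε_{d,1}(k) = {k/(d-1)} + {k/2}` satisfies `0 ≤ ε_{d,1}(k) < 3/2 - 1/(2(d-1))`;
consequently, with the Betti numbers `b` of the free loop space pair of `S^d`,
`∑_{j=0}^k (-1)^j b_j ≤ k(d+1)/(2(d-1)) - (d-1)/2`. -/
theorem stmt_3 (d : ℕ) (hd : 3 ≤ d) (hodd : Odd d) (b : ℕ → ℕ)
    (hb : ∀ j : ℕ, b j =
      if ∃ m : ℕ, 2 ≤ m ∧ j = m * (d - 1) then 2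
      else if Even j ∧ d - 1 ≤ j then 1
      else 0) :
    ∀ k : ℕ, d - 1 ≤ k →
      (0 ≤ Int.fract ((k : ℝ) / ((d : ℝ) - 1)) + Int.fract ((k : ℝ) / 2) ∧
        Int.fract ((k : ℝ) / ((d : ℝ) - 1)) + Int.fract ((k : ℝ) / 2)
          < 3 / 2 - 1 / (2 * ((d : ℝ) - 1))) ∧
      ∑ j ∈ Finset.range (k + 1), (-1 : ℝ) ^ j * (b j : ℝ)
        ≤ (k : ℝ) * ((d : ℝ) + 1) / (2 * ((d : ℝ) - 1)) - ((d : ℝ) - 1) / 2 := by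
  set e := d - 1 with he_def
  have he2 : 2 ≤ e := by omega
  have hee : 2 ∣ e := by obtain ⟨t, ht⟩ := hodd; omega
  have hcast : ((d : ℝ) - 1) = (e : ℝ) := by
    rw [he_def, Nat.cast_sub (by omega)]; norm_num
  have heR : (0 : ℝ) < (e : ℝ) := by positivity
  -- b vanishes on odd indices
  have hbodd : ∀ j : ℕ, ¬ Even j → b j = 0 := by
    intro j hj
    rw [hb j, if_neg, if_neg]
    · exact fun h => hj h.1
    · rintro ⟨m, hm, rfl⟩
      exact hj (even_iff_two_dvd.2 (hee.mul_left m))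
  -- key counting identity
  have key : ∀ k : ℕ, e ≤ k →
      (∑ j ∈ Finset.range (k + 1), b j) + e / 2 = k / 2 + k / e := by
    intro k hk
    induction k, hk using Nat.le_induction with
    | base =>
      have h0 : ∑ j ∈ Finset.range e, b j = 0 := by
        apply Finset.sum_eq_zero
        intro j hj
        rw [Finset.mem_range] at hj
        rw [hb j, if_neg, if_neg]
        · exact fun h => absurd h.2 (by omega)
        · rintro ⟨m, hm, rfl⟩
          nlinarith
      rw [Finset.sum_range_succ, h0, hb e, if_neg, if_pos]
      · have : e / e = 1 := Nat.div_self (by omega)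
        omega
      · exact ⟨(even_iff_two_dvd).2 hee, le_refl e⟩
      · rintro ⟨m, hm, hme⟩
        nlinarith
    | succ k hk ih =>
      rw [Finset.sum_range_succ, hb (k + 1)]
      have hs2 : (k + 1) / 2 = k / 2 + if 2 ∣ k + 1 then 1 else 0 := Nat.succ_div
      have hse : (k + 1) / e = k / e + if e ∣ k + 1 then 1 else 0 := Nat.succ_div
      by_cases h2 : 2 ∣ k + 1
      · by_cases hE : e ∣ k + 1
        · obtain ⟨m, hm⟩ := hE
          have hm2 : 2 ≤ m := by
            rcases Nat.lt_or_ge m 2 with h | h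
            · interval_cases m <;> omega
            · exact h
          rw [if_pos ⟨m, hm2, by rw [hm, Nat.mul_comm]⟩]
          rw [if_pos h2] at hs2
          rw [if_pos ⟨m, hm⟩] at hse
          omega
        · rw [if_neg, if_pos]
          · rw [if_pos h2] at hs2
            rw [if_neg hE] at hse
            omega
          · exact ⟨(even_iff_two_dvd).2 h2, by omega⟩
          · rintro ⟨m, hm, hme⟩
            exact hE ⟨m, by rw [hme, Nat.mul_comm]⟩
      · have hE : ¬ e ∣ k + 1 := fun h => h2 (hee.trans h)
        rw [if_neg, if_neg]
        · rw [if_neg h2] at hs2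
          rw [if_neg hE] at hse
          omega
        · exact fun h => h2 ((even_iff_two_dvd).1 h.1)
        · rintro ⟨m, hm, hme⟩
          exact hE ⟨m, by rw [hme, Nat.mul_comm]⟩
  intro k hk
  refine ⟨⟨add_nonneg (Int.fract_nonneg _) (Int.fract_nonneg _), ?_⟩, ?_⟩
  · -- fract bound
    rw [hcast]
    rw [show ((2:ℝ)) = ((2:ℕ):ℝ) by norm_num,
      Int.fract_div_natCast_eq_div_natCast_mod, Int.fract_div_natCast_eq_div_natCast_mod]
    simp only [Nat.cast_ofNat]
    have h1 : ((k % e : ℕ) : ℝ) ≤ (e : ℝ) - 1 := by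
      have h : (k % e) + 1 ≤ e := Nat.mod_lt k (show 0 < e by omega)
      have h' := (Nat.cast_le (α := ℝ)).2 h
      push_cast at h'
      linarith
    have h2 : ((k % 2 : ℕ) : ℝ) ≤ 1 := by
      have := Nat.mod_lt k (show 0 < 2 by norm_num)
      exact_mod_cast Nat.le_of_lt_succ this
    have hde : (1 : ℝ) / (2 * (e : ℝ)) < 1 / (e : ℝ) := by
      rw [div_lt_div_iff₀ (by positivity) heR]; nlinarith
    have hA : ((k % e : ℕ) : ℝ) / (e : ℝ) ≤ 1 - 1 / (e : ℝ) := by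
      rw [div_le_iff₀ heR, sub_mul, one_mul, one_div_mul_cancel heR.ne']; linarith
    have hB : ((k % 2 : ℕ) : ℝ) / 2 ≤ 1 / 2 := by linarith
    linarith
  · -- sum bound
    have hsum : ∑ j ∈ Finset.range (k + 1), (-1 : ℝ) ^ j * (b j : ℝ)
        = ((∑ j ∈ Finset.range (k + 1), b j : ℕ) : ℝ) := by
      push_cast
      apply Finset.sum_congr rfl
      intro j _
      by_cases hj : Even j
      · rw [hj.neg_one_pow, one_mul]
      · rw [hbodd j hj]; simp
    rw [hsum]
    have hkey := key k hk
    have hle : e / 2 ≤ k / 2 := Nat.div_le_div_right hk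
    have hNk : (∑ j ∈ Finset.range (k + 1), b j) = k / 2 + k / e - e / 2 := by omega
    rw [hNk]
    have hcast2 : (((k / 2 + k / e - e / 2 : ℕ)) : ℝ)
        = ((k / 2 : ℕ) : ℝ) + ((k / e : ℕ) : ℝ) - ((e / 2 : ℕ) : ℝ) := by
      rw [Nat.cast_sub (by omega)]; push_cast; ring
    rw [hcast2]
    have hc1 : ((k / 2 : ℕ) : ℝ) ≤ (k : ℝ) / 2 := Nat.cast_div_le
    have hc2 : ((k / e : ℕ) : ℝ) ≤ (k : ℝ) / (e : ℝ) := Nat.cast_div_le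
    have hc3 : ((e / 2 : ℕ) : ℝ) = (e : ℝ) / 2 := by
      rw [Nat.cast_div hee (by norm_num)]; norm_num
    rw [hcast, hc3]
    have hrhs : (k : ℝ) * ((e : ℝ) + 1 + 1) / (2 * (e : ℝ)) = (k : ℝ) / 2 + (k : ℝ) / (e : ℝ) := by
      field_simp
      ring
    have hdcast : (d : ℝ) + 1 = (e : ℝ) + 1 + 1 := by
      rw [← hcast]; ring
    rw [hdcast, hrhs]
    linarith
end

section
/- Let d ≥ 2 be an even integer, h ≥ 1 an integer, D = d(h+1) − 2, and let b : ℕ → ℕ be the sequence defined by: b_q = 0 if q is even or q ≤ d−2; b_q = ⌊(q−(d−1))/d⌋ + 1 if q is odd and d−1 ≤ q < d−1+(h−1)d; b_q = h+1 if q is odd and q = (d−1) + iD + jd for some integers i ≥ 1 and 0 ≤ j ≤ h−1; and b_q = h for all other odd q ≥ hd−1. Then for every integer k ≥ hd−1 one has ∑_{q=0}^{k} b_q = (h(h+1)d/(2D))·(k−(d−1)) − h(h−1)d/4 + 1 + ε_{d,h}(k), where, with t = {(k−(d−1))/D}, ε_{d,h}(k) = {(D/(hd))·t} − (2/d + (d−2)/(hd))·t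 − h·{(D/2)·t} − {(D/d)·t}. -/
private def rampN (d m : ℕ) : ℕ :=
  m / 2 + 1 + d / 2 * (m / d * (m / d - 1) / 2) + m / d * (m % d / 2 + 1)

private def FZ (d h D m : ℕ) : ℤ :=
  (h : ℤ) * ((d / 2 : ℕ) : ℤ) * ((h : ℤ) + 1) * ((m / D : ℕ) : ℤ)
    + (h : ℤ) * ((m % D / 2 : ℕ) : ℤ)
    + ((m % D / d : ℕ) : ℤ) - ((m % D / (h * d) : ℕ) : ℤ)
    - ((d / 2 * (h * (h - 1) / 2) : ℕ) : ℤ) + 1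

private def bval3 (d h D m' : ℕ) : ℕ :=
  if m' % 2 = 1 then 0
  else if D ≤ m' ∧ m' % D % d = 0 ∧ m' % D / d ≤ h - 1 then h + 1 else h

private def GG (d h D k : ℕ) : ℤ :=
  if k + 1 ≤ d - 1 then 0
  else if k + 1 ≤ h * d - 1 then (rampN d (k - (d - 1)) : ℤ)
  else FZ d h D (k - (d - 1))

private lemma tri_succ (u : ℕ) : (u + 1) * u / 2 = u * (u - 1) / 2 + u := by
  rcases u with _ | v
  · rfl
  · have h : (v + 1 + 1) * (v + 1) = (v + 1) * v + 2 * (v + 1) := by ring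
    rw [h, Nat.add_mul_div_left _ _ (by norm_num : (0:ℕ) < 2)]
    simp

private lemma ramp_step (A : ℕ) (hA : 1 ≤ A) (m : ℕ) :
    rampN (2 * A) (m + 1)
      = rampN (2 * A) m + (if (m + 1) % 2 = 0 then (m + 1) / (2 * A) + 1 else 0) := by
  have hdd : 0 < 2 * A := by omega
  obtain ⟨u, e, hm, he⟩ : ∃ u e, m = 2 * (A * u) + e ∧ e < 2 * A :=
    ⟨m / (2 * A), m % (2 * A), by
      have h1 := Nat.div_add_mod m (2 * A)
      have h2 : 2 * (A * (m / (2 * A))) = 2 * A * (m / (2 * A)) := by ring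
      omega, Nat.mod_lt _ hdd⟩
  have hmm : m = 2 * A * u + e := by rw [hm]; ring
  have h1 : m / (2 * A) = u := by
    rw [hmm, Nat.mul_add_div hdd, Nat.div_eq_of_lt he, add_zero]
  have h2 : m % (2 * A) = e := by
    rw [hmm, Nat.mul_add_mod, Nat.mod_eq_of_lt he]
  have hA2 : 2 * A / 2 = A := by omega
  rcases (by omega : e + 1 < 2 * A ∨ e + 1 = 2 * A) with he1 | he1
  · have h3 : (m + 1) / (2 * A) = u := by
      rw [show m + 1 = 2 * A * u + (e + 1) by omega, Nat.mul_add_div hdd,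
        Nat.div_eq_of_lt he1, add_zero]
    have h4 : (m + 1) % (2 * A) = e + 1 := by
      rw [show m + 1 = 2 * A * u + (e + 1) by omega, Nat.mul_add_mod, Nat.mod_eq_of_lt he1]
    unfold rampN
    rw [h1, h2, h3, h4, hA2]
    rcases Nat.mod_two_eq_zero_or_one e with hp | hp
    · rw [if_neg (by omega)]
      rw [show (m + 1) / 2 = m / 2 by omega, show (e + 1) / 2 = e / 2 by omega, add_zero]
    · rw [if_pos (by omega)]
      rw [show (m + 1) / 2 = m / 2 + 1 by omega, show (e + 1) / 2 = e / 2 + 1 by omega]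
      ring
  · have hm1 : m + 1 = 2 * (A * (u + 1)) := by
      have h5 : A * (u + 1) = A * u + A := by ring
      omega
    have hm1' : m + 1 = 2 * A * (u + 1) := by rw [hm1]; ring
    have h3 : (m + 1) / (2 * A) = u + 1 := by
      rw [hm1', Nat.mul_div_cancel_left _ hdd]
    have h4 : (m + 1) % (2 * A) = 0 := by rw [hm1', Nat.mul_mod_right]
    have hApos : 1 ≤ A * (u + 1) := Nat.one_le_iff_ne_zero.2 (by positivity)
    have p1 : (m + 1) % 2 = 0 := by omega
    have p2 : (m + 1) / 2 = A * (u + 1) := by omega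
    have p4 : m / 2 = A * (u + 1) - 1 := by omega
    have p3 : e / 2 = A - 1 := by omega
    unfold rampN
    rw [h1, h2, h3, h4, hA2, if_pos p1, p2, p4, p3]
    simp only [Nat.add_sub_cancel, tri_succ]
    have q1 : A * (u * (u - 1) / 2 + u) = A * (u * (u - 1) / 2) + A * u := by ring
    have q2 : A * (u + 1) = A * u + A := by ring
    have q3 : u * (A - 1 + 1) = u * A := by
      congr 1
      omega
    have q4 : u * A = A * u := by ring
    omega
private lemma rampN_zero (d : ℕ) : rampN d 0 = 1 := by simp [rampN]

private lemma two_mul_tri (u : ℕ) : 2 * (u * (u - 1) / 2) = u * (u - 1) := by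
  rcases u with _ | v
  · rfl
  · rw [Nat.mul_div_cancel']
    simpa [mul_comm] using (Nat.even_mul_succ_self v).two_dvd

private lemma ramp_val (A h : ℕ) (hA : 1 ≤ A) (hh : 2 ≤ h) :
    rampN (2 * A) ((h - 1) * (2 * A) - 1) = A * (h * (h - 1) / 2) := by
  obtain ⟨g, rfl⟩ : ∃ g, h = g + 2 := ⟨h - 2, by omega⟩
  have hdd : 0 < 2 * A := by omega
  set m := (g + 2 - 1) * (2 * A) - 1 with hmdef
  have hm : m = 2 * A * g + (2 * A - 1) := by
    have : (g + 2 - 1) * (2 * A) = 2 * A * g + 2 * A := by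
      rw [show g + 2 - 1 = g + 1 by omega]; ring
    omega
  have hm2 : m = 2 * (A * g + A) - 1 := by
    have : 2 * A * g = 2 * (A * g) := by ring
    omega
  have h1 : m / (2 * A) = g := by
    rw [hm, Nat.mul_add_div hdd, Nat.div_eq_of_lt (by omega), add_zero]
  have h2 : m % (2 * A) = 2 * A - 1 := by
    rw [hm, Nat.mul_add_mod, Nat.mod_eq_of_lt (by omega)]
  have hAg : 1 ≤ A * g + A := by omega
  have h3 : m / 2 = A * g + A - 1 := by omega
  have h4 : (2 * A - 1) / 2 = A - 1 := by omega
  have hA2 : 2 * A / 2 = A := by omega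
  unfold rampN
  rw [h1, h2, h3, h4, hA2]
  have t1 : 2 * (g * (g - 1) / 2) = g * (g - 1) := two_mul_tri g
  have t2 : 2 * ((g + 2) * (g + 2 - 1) / 2) = (g + 2) * (g + 1) := by
    rw [two_mul_tri (g + 2)]; congr 1
  have t3 : (g + 2) * (g + 1) = g * (g - 1) + 4 * g + 2 := by
    rcases g with _ | w
    · rfl
    · have : (w + 1 + 2) * (w + 1 + 1) = (w + 1) * w + 4 * (w + 1) + 2 := by ring
      simpa using this
  have q1 : A * ((g + 2) * (g + 2 - 1) / 2)
      = A * (g * (g - 1) / 2) + A * (2 * g + 1) := by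
    have : (g + 2) * (g + 2 - 1) / 2 = g * (g - 1) / 2 + (2 * g + 1) := by omega
    rw [this]; ring
  have q2 : A * (2 * g + 1) = 2 * (A * g) + A := by ring
  have q3 : g * (A - 1 + 1) = g * A := by congr 1; omega
  have q4 : g * A = A * g := by ring
  omega

private lemma FZ_val (A h D : ℕ) (hA : 1 ≤ A) (hh : 1 ≤ h)
    (hD : D = 2 * A * (h + 1) - 2) :
    FZ (2 * A) h D ((h - 1) * (2 * A)) = (A : ℤ) * ((h * (h - 1) / 2 : ℕ) : ℤ) + h := by
  have hdd : 0 < 2 * A := by omega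
  set m := (h - 1) * (2 * A) with hmdef
  have hhd : 2 * A * h = 2 * (A * h) := by ring
  have hDD : D = 2 * (A * h) + 2 * A - 2 := by
    have : 2 * A * (h + 1) = 2 * (A * h) + 2 * A := by ring
    omega
  have hm : m = 2 * (A * h) - 2 * A := by
    have : (h - 1) * (2 * A) + 1 * (2 * A) = ((h - 1) + 1) * (2 * A) := by ring
    have h2 : ((h - 1) + 1) * (2 * A) = h * (2 * A) := by congr 1; omega
    have h3 : h * (2 * A) = 2 * (A * h) := by ring
    omega
  have hAh : A ≤ A * h := Nat.le_mul_of_pos_right A hh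
  have hmD : m < D := by omega
  have h1 : m / D = 0 := Nat.div_eq_of_lt hmD
  have h2 : m % D = m := Nat.mod_eq_of_lt hmD
  have h3 : m / 2 = A * h - A := by omega
  have h4 : m / (2 * A) = h - 1 := by
    rw [hmdef, Nat.mul_div_cancel _ hdd]
  have h5 : m / (h * (2 * A)) = 0 := by
    apply Nat.div_eq_of_lt
    have : h * (2 * A) = 2 * (A * h) := by ring
    omega
  have hA2 : 2 * A / 2 = A := by omega
  have hW := two_mul_tri h
  unfold FZ
  rw [h1, h2, h3, h4, h5, hA2]
  have hc1 : ((A * h - A : ℕ) : ℤ) = (A : ℤ) * h - A := by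
    push_cast [Nat.cast_sub hAh]; ring
  have hc2 : ((h - 1 : ℕ) : ℤ) = (h : ℤ) - 1 := by push_cast [Nat.cast_sub hh]; ring
  generalize hw : h * (h - 1) / 2 = w at hW ⊢
  have hW' : 2 * (w : ℤ) = (h : ℤ) * ((h : ℤ) - 1) := by
    have := congrArg (Nat.cast : ℕ → ℤ) hW
    push_cast [Nat.cast_sub hh] at this
    linarith
  push_cast [hc1, hc2]
  linear_combination (-(A : ℤ)) * hW'

private lemma FZ_step (A h D : ℕ) (hA : 1 ≤ A) (hh : 1 ≤ h)
    (hD : D = 2 * A * (h + 1) - 2) (m : ℕ) (hm : (h - 1) * (2 * A) ≤ m) :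
    FZ (2 * A) h D (m + 1) = FZ (2 * A) h D m + (bval3 (2 * A) h D (m + 1) : ℤ) := by
  have hdd : 0 < 2 * A := by omega
  have hAh1 : 1 ≤ A * h := Nat.mul_pos hA hh
  have hDD : D = 2 * (A * h) + 2 * A - 2 := by
    have : 2 * A * (h + 1) = 2 * (A * h) + 2 * A := by ring
    omega
  have hD0 : 0 < D := by omega
  have hD2 : D % 2 = 0 := by omega
  have hmd : h * (2 * A) = 2 * (A * h) := by ring
  have hm1d : (h - 1) * (2 * A) + 2 * A = h * (2 * A) := by
    have e1 : (h - 1) * (2 * A) + 2 * A = (h - 1 + 1) * (2 * A) := by ring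
    have e2 : h - 1 + 1 = h := by omega
    rw [e1, e2]
  obtain ⟨q0, r, hqr, hrD⟩ : ∃ q0 r, m = D * q0 + r ∧ r < D :=
    ⟨m / D, m % D, (Nat.div_add_mod m D).symm, Nat.mod_lt _ hD0⟩
  have h1 : m / D = q0 := by
    rw [hqr, Nat.mul_add_div hD0, Nat.div_eq_of_lt hrD, add_zero]
  have h2 : m % D = r := by rw [hqr, Nat.mul_add_mod, Nat.mod_eq_of_lt hrD]
  have hDq2 : D * q0 % 2 = 0 := by rw [Nat.mul_mod, hD2]; simp
  have hA2' : 2 * A / 2 = A := by omega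
  rcases (by omega : r + 1 < D ∨ r + 1 = D) with hc | hc
  · -- within period
    have h3 : (m + 1) / D = q0 := by
      rw [show m + 1 = D * q0 + (r + 1) by omega, Nat.mul_add_div hD0,
        Nat.div_eq_of_lt hc, add_zero]
    have h4 : (m + 1) % D = r + 1 := by
      rw [show m + 1 = D * q0 + (r + 1) by omega, Nat.mul_add_mod, Nat.mod_eq_of_lt hc]
    rcases Nat.mod_two_eq_zero_or_one r with hr2 | hr2
    · -- r even, so m+1 is odd shifted: b = 0
      have hb : bval3 (2 * A) h D (m + 1) = 0 := by
        unfold bval3; rw [if_pos (by omega)]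
      have s2 : (r + 1) / 2 = r / 2 := by omega
      have sd : (r + 1) / (2 * A) = r / (2 * A) := by
        rw [Nat.succ_div, if_neg, add_zero]
        rintro ⟨c, hcc⟩
        have : 2 * A * c = 2 * (A * c) := by ring
        omega
      have shd : (r + 1) / (h * (2 * A)) = r / (h * (2 * A)) := by
        rw [Nat.succ_div, if_neg, add_zero]
        rintro ⟨c, hcc⟩
        have : h * (2 * A) * c = 2 * (A * (h * c)) := by ring
        omega
      rw [hb]; unfold FZ; rw [h1, h2, h3, h4, s2, sd, shd]; push_cast; ring
    · -- r odd
      have s2 : (r + 1) / 2 = r / 2 + 1 := by omega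
      by_cases hdvd : (2 * A) ∣ (r + 1)
      · obtain ⟨c, hcc⟩ := hdvd
        have hcc2 : r + 1 = 2 * (A * c) := by rw [hcc]; ring
        have hc1 : 1 ≤ c := by
          rcases Nat.eq_zero_or_pos c with rfl | h'
          · omega
          · exact h'
        have hcle : c ≤ h := by
          by_contra hle; push_neg at hle
          have h5 : A * (h + 1) ≤ A * c := mul_le_mul_right hle A
          have h6 : A * (h + 1) = A * h + A := by ring
          omega
        have sd : (r + 1) / (2 * A) = r / (2 * A) + 1 := by
          rw [Nat.succ_div, if_pos ⟨c, hcc⟩]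
        have sdh : (r + 1) / (2 * A) = c := by rw [hcc, Nat.mul_div_cancel_left _ hdd]
        rcases (by omega : c = h ∨ c ≤ h - 1) with hch0 | hch
        · -- c = h : extra cancels
          have shd : (r + 1) / (h * (2 * A)) = r / (h * (2 * A)) + 1 := by
            rw [Nat.succ_div, if_pos ⟨1, by rw [hcc, hch0]; ring⟩]
          have hb : bval3 (2 * A) h D (m + 1) = h := by
            unfold bval3
            rw [if_neg (by omega), if_neg]
            rintro ⟨-, -, hle3⟩
            rw [h4, sdh] at hle3
            omega
          rw [hb]; unfold FZ; rw [h1, h2, h3, h4, s2, sd, shd]; push_cast; ring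
        · -- c ≤ h - 1 : Betti jumps to h+1
          have hcA : A * c ≤ A * (h - 1) := mul_le_mul_right hch A
          have hcA2 : A * (h - 1) + A = A * h := by
            have : A * (h - 1) + A = A * (h - 1 + 1) := by ring
            rw [this, show h - 1 + 1 = h by omega]
          have hq01 : 1 ≤ q0 := by
            by_contra h0; push_neg at h0
            have hq00 : q0 = 0 := by omega
            rw [hq00, mul_zero, zero_add] at hqr
            have e4 : 2 * A * (h - 1) = (h - 1) * (2 * A) := by ring
            have e5 : 2 * (A * (h - 1)) = 2 * A * (h - 1) := by ring
            omega
          have hDle : D ≤ m + 1 := by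
            have : D * 1 ≤ D * q0 := mul_le_mul_right hq01 D
            omega
          have hnd : ¬ (h * (2 * A)) ∣ (r + 1) := by
            rintro ⟨c2, hc2⟩
            have hc2e : r + 1 = 2 * (A * (h * c2)) := by rw [hc2]; ring
            have hc21 : 1 ≤ c2 := by
              rcases Nat.eq_zero_or_pos c2 with rfl | h'
              · exfalso; simp only [mul_zero] at hc2e; omega
              · exact h'
            have : h * 1 ≤ h * c2 := mul_le_mul_right hc21 h
            have : A * h ≤ A * (h * c2) := mul_le_mul_right (by omega) A
            omega
          have shd : (r + 1) / (h * (2 * A)) = r / (h * (2 * A)) := by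
            rw [Nat.succ_div, if_neg hnd, add_zero]
          have hb : bval3 (2 * A) h D (m + 1) = h + 1 := by
            unfold bval3
            rw [if_neg (by omega), if_pos]
            refine ⟨hDle, ?_, ?_⟩
            · rw [h4, hcc, Nat.mul_mod_right]
            · rw [h4, sdh]; exact hch
          rw [hb]; unfold FZ; rw [h1, h2, h3, h4, s2, sd, shd]; push_cast; ring
      · -- d does not divide r+1
        have sd : (r + 1) / (2 * A) = r / (2 * A) := by
          rw [Nat.succ_div, if_neg hdvd, add_zero]
        have shd : (r + 1) / (h * (2 * A)) = r / (h * (2 * A)) := by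
          rw [Nat.succ_div, if_neg, add_zero]
          intro hx
          exact hdvd (dvd_trans ⟨h, by ring⟩ hx)
        have hb : bval3 (2 * A) h D (m + 1) = h := by
          unfold bval3
          rw [if_neg (by omega), if_neg]
          rintro ⟨-, hmod, -⟩
          rw [h4] at hmod
          exact hdvd (Nat.dvd_of_mod_eq_zero hmod)
        rw [hb]; unfold FZ; rw [h1, h2, h3, h4, s2, sd, shd]; push_cast; ring
  · -- r + 1 = D : crossing the period boundary
    have hm1 : m + 1 = D * (q0 + 1) := by
      have : D * (q0 + 1) = D * q0 + D := by ring
      omega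
    have h3 : (m + 1) / D = q0 + 1 := by rw [hm1, Nat.mul_div_cancel_left _ hD0]
    have h4 : (m + 1) % D = 0 := by rw [hm1, Nat.mul_mod_right]
    have hp : (m + 1) % 2 = 0 := by
      have : D * (q0 + 1) % 2 = 0 := by rw [Nat.mul_mod, hD2]; simp
      omega
    have hb : bval3 (2 * A) h D (m + 1) = h + 1 := by
      unfold bval3
      rw [if_neg (by omega), if_pos]
      refine ⟨?_, by rw [h4]; simp, by rw [h4]; simp⟩
      have : D * 1 ≤ D * (q0 + 1) := mul_le_mul_right (by omega) D
      omega
    rw [hb]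
    have hr : r = D - 1 := by omega
    have hAh2 : 2 ≤ A * (h + 1) := by
      have : 1 * (h + 1) ≤ A * (h + 1) := mul_le_mul_left hA (h + 1)
      omega
    have hDD2 : D = 2 * (A * (h + 1)) - 2 := by
      have : 2 * A * (h + 1) = 2 * (A * (h + 1)) := by ring
      omega
    have hr2' : r / 2 = A * (h + 1) - 2 := by omega
    rcases (by omega : A = 1 ∨ 2 ≤ A) with rfl | hA2
    · -- A = 1, d = 2
      have hr' : r = 2 * h - 1 := by omega
      have rhd : r / (h * (2 * 1)) = 0 := by
        apply Nat.div_eq_of_lt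
        have : h * (2 * 1) = 2 * (1 * h) := by ring
        omega
      unfold FZ
      rw [h1, h2, h3, h4, hA2', hr2', rhd]
      simp only [Nat.zero_div]
      generalize h * (h - 1) / 2 = w
      have hc1 : ((1 * (h + 1) - 2 : ℕ) : ℤ) = (h : ℤ) - 1 := by
        have : 1 * (h + 1) - 2 = h - 1 := by omega
        rw [this]; push_cast [Nat.cast_sub hh]; ring
      push_cast [hc1]
      ring
    · -- A ≥ 2, d ≥ 4
      have rd : r / (2 * A) = h := by
        rw [show r = 2 * A * h + (2 * A - 3) by
          have : 2 * A * h = 2 * (A * h) := by ring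
          omega, Nat.mul_add_div hdd, Nat.div_eq_of_lt (by omega), add_zero]
      have rhd : r / (h * (2 * A)) = 1 := by
        rw [show r = h * (2 * A) * 1 + (2 * A - 3) by
          have : h * (2 * A) * 1 = 2 * (A * h) := by ring
          omega, Nat.mul_add_div (by omega), Nat.div_eq_of_lt (by omega)]
      unfold FZ
      rw [h1, h2, h3, h4, hA2', hr2', rd, rhd]
      simp only [Nat.zero_div]
      generalize h * (h - 1) / 2 = w
      have hc1 : ((A * (h + 1) - 2 : ℕ) : ℤ) = (A : ℤ) * ((h : ℤ) + 1) - 2 := by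
        push_cast [Nat.cast_sub hAh2]; ring
      push_cast [hc1]
      ring

open scoped Classical in
private lemma b_eval (d h D : ℕ) (hd : 2 ≤ d) (heven : Even d) (hh : 1 ≤ h)
    (hD : D = d * (h + 1) - 2) (b : ℕ → ℕ)
    (hb : ∀ q : ℕ, b q =
      if Even q ∨ q ≤ d - 2 then 0
      else if d - 1 ≤ q ∧ q < d - 1 + (h - 1) * d then (q - (d - 1)) / d + 1
      else if ∃ i : ℕ, 1 ≤ i ∧ ∃ j : ℕ, j ≤ h - 1 ∧ q = (d - 1) + i * D + j * d then h + 1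
      else h) (q : ℕ) (hq : h * d ≤ q) :
    b q = bval3 d h D (q - (d - 1)) := by
  have hde : d % 2 = 0 := Nat.even_iff.mp heven
  have hdq : d ≤ q := by
    have := mul_le_mul_left hh d
    omega
  set m' := q - (d - 1) with hm'def
  have hqm : q = m' + (d - 1) := by omega
  have hDd : D + 2 = h * d + d := by
    have : d * (h + 1) = h * d + d := by ring
    omega
  have ehd : (h - 1) * d + d = h * d := by
    have e1 : (h - 1) * d + 1 * d = (h - 1 + 1) * d := by ring
    rw [show h - 1 + 1 = h by omega] at e1
    omega
  have hD0 : 0 < D := by omega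
  have hd0 : 0 < d := by omega
  rw [hb q]
  by_cases hp : m' % 2 = 1
  · have hev : Even q := by rw [Nat.even_iff]; omega
    rw [if_pos (Or.inl hev)]
    unfold bval3
    rw [if_pos hp]
  · have hnot1 : ¬ (Even q ∨ q ≤ d - 2) := by
      push_neg
      exact ⟨by rw [Nat.even_iff]; omega, by omega⟩
    rw [if_neg hnot1]
    have hnot2 : ¬ (d - 1 ≤ q ∧ q < d - 1 + (h - 1) * d) := by
      rintro ⟨-, hlt⟩; omega
    rw [if_neg hnot2]
    unfold bval3
    rw [if_neg hp]
    by_cases hcond : D ≤ m' ∧ m' % D % d = 0 ∧ m' % D / d ≤ h - 1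
    · rw [if_pos hcond]
      obtain ⟨hDm, hmod, hdiv⟩ := hcond
      rw [if_pos]
      refine ⟨m' / D, (Nat.one_le_div_iff hD0).2 hDm, m' % D / d, hdiv, ?_⟩
      have e1 := Nat.div_add_mod m' D
      have e2 := Nat.div_add_mod (m' % D) d
      have r1 : m' / D * D = D * (m' / D) := by ring
      have r2 : m' % D / d * d = d * (m' % D / d) := by ring
      omega
    · rw [if_neg hcond, if_neg]
      rintro ⟨i, hi, j, hj, hqe⟩
      apply hcond
      have hjd : j * d ≤ (h - 1) * d := mul_le_mul_left hj d
      have hm'e : m' = i * D + j * d := by omega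
      have hjdD : j * d < D := by omega
      have hiD : D ≤ i * D := by
        have := mul_le_mul_left hi D
        rwa [one_mul] at this
      have hmod2 : m' % D = j * d := by
        rw [hm'e, show i * D + j * d = D * i + j * d by ring, Nat.mul_add_mod,
          Nat.mod_eq_of_lt hjdD]
      refine ⟨by omega, ?_, ?_⟩
      · rw [hmod2, Nat.mul_mod_left]
      · rw [hmod2, Nat.mul_div_cancel _ hd0]
        exact hj

open scoped Classical in
private lemma GG_step (d h D : ℕ) (hd : 2 ≤ d) (heven : Even d) (hh : 1 ≤ h)
    (hD : D = d * (h + 1) - 2) (b : ℕ → ℕ)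
    (hb : ∀ q : ℕ, b q =
      if Even q ∨ q ≤ d - 2 then 0
      else if d - 1 ≤ q ∧ q < d - 1 + (h - 1) * d then (q - (d - 1)) / d + 1
      else if ∃ i : ℕ, 1 ≤ i ∧ ∃ j : ℕ, j ≤ h - 1 ∧ q = (d - 1) + i * D + j * d then h + 1
      else h) (k : ℕ) :
    GG d h D (k + 1) = GG d h D k + (b (k + 1) : ℤ) := by
  have hde : d % 2 = 0 := Nat.even_iff.mp heven
  obtain ⟨A, hdA⟩ : ∃ A, d = 2 * A := ⟨d / 2, by omega⟩
  have hA : 1 ≤ A := by omega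
  have hD' : D = 2 * A * (h + 1) - 2 := by rw [← hdA]; exact hD
  have hDd : D + 2 = h * d + d := by
    have : d * (h + 1) = h * d + d := by ring
    omega
  have ehd : (h - 1) * d + d = h * d := by
    have e1 : (h - 1) * d + 1 * d = (h - 1 + 1) * d := by ring
    rw [show h - 1 + 1 = h by omega] at e1
    omega
  have hhd2 : d ≤ h * d := by
    have := mul_le_mul_left hh d
    omega
  have hD0 : 0 < D := by omega
  have hd0 : 0 < d := by omega
  rcases (by omega : k + 2 ≤ d - 1 ∨ k + 2 = d ∨ (d - 1 < k + 1 ∧ k + 2 ≤ h * d - 1)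
      ∨ (d - 1 < k + 1 ∧ k + 2 = h * d) ∨ h * d ≤ k + 1) with hk | hk | hk | hk | hk
  · -- deep in region 1
    have hG1 : GG d h D (k + 1) = 0 := by
      unfold GG; rw [if_pos (show k + 1 + 1 ≤ d - 1 by omega)]
    have hG0 : GG d h D k = 0 := by
      unfold GG; rw [if_pos (show k + 1 ≤ d - 1 by omega)]
    rw [hG1, hG0, hb, if_pos (Or.inr (show k + 1 ≤ d - 2 by omega))]
    simp
  · -- k + 1 = d - 1
    have hbv : b (k + 1) = 1 := by
      rw [hb]
      rw [if_neg (by push_neg; exact ⟨by rw [Nat.even_iff]; omega, by omega⟩)]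
      rcases (by omega : h = 1 ∨ 2 ≤ h) with hc | h2
      · have hz : (h - 1) * d = 0 := by rw [hc]; norm_num
        rw [if_neg (by rintro ⟨-, hlt⟩; omega), if_neg, hc]
        rintro ⟨i, hi, j, hj, hqe⟩
        have hiD : D ≤ i * D := by
          have := mul_le_mul_left hi D
          rwa [one_mul] at this
        omega
      · have h2d : 2 * d ≤ h * d := mul_le_mul_left h2 d
        rw [if_pos ⟨show d - 1 ≤ k + 1 by omega, show k + 1 < d - 1 + (h - 1) * d by omega⟩,
          show k + 1 - (d - 1) = 0 by omega, Nat.zero_div]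
    have hG0 : GG d h D k = 0 := by
      unfold GG; rw [if_pos (show k + 1 ≤ d - 1 by omega)]
    have hG1 : GG d h D (k + 1) = 1 := by
      rcases (by omega : h = 1 ∨ 2 ≤ h) with hc | h2
      · have hhd : h * d = d := by rw [hc, one_mul]
        unfold GG
        rw [if_neg (show ¬ k + 1 + 1 ≤ d - 1 by omega),
          if_neg (show ¬ k + 1 + 1 ≤ h * d - 1 by omega),
          show k + 1 - (d - 1) = 0 by omega]
        have hv := FZ_val A h D hA hh hD'
        rw [show (h - 1) * (2 * A) = 0 by simp [hc]] at hv
        rw [hdA, hv, show h * (h - 1) / 2 = 0 by simp [hc], hc]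
        simp
      · have h2d : 2 * d ≤ h * d := mul_le_mul_left h2 d
        unfold GG
        rw [if_neg (show ¬ k + 1 + 1 ≤ d - 1 by omega),
          if_pos (show k + 1 + 1 ≤ h * d - 1 by omega),
          show k + 1 - (d - 1) = 0 by omega, rampN_zero]
        norm_num
    rw [hG0, hG1, hbv]
    norm_num
  · -- ramp region
    obtain ⟨hk1, hk2⟩ := hk
    set m := k + 1 - (d - 1) with hmdef
    have hm1 : 1 ≤ m := by omega
    have hkm : k - (d - 1) = m - 1 := by omega
    have hG1 : GG d h D (k + 1) = (rampN d m : ℤ) := by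
      unfold GG
      rw [if_neg (show ¬ k + 1 + 1 ≤ d - 1 by omega),
        if_pos (show k + 1 + 1 ≤ h * d - 1 by omega), ← hmdef]
    have hG0 : GG d h D k = (rampN d (m - 1) : ℤ) := by
      unfold GG
      rw [if_neg (show ¬ k + 1 ≤ d - 1 by omega),
        if_pos (show k + 1 ≤ h * d - 1 by omega), hkm]
    rw [hG1, hG0]
    have hstep := ramp_step A hA (m - 1)
    rw [show m - 1 + 1 = m by omega] at hstep
    rw [← hdA] at hstep
    rw [hstep]
    have hq : k + 1 = m + (d - 1) := by omega
    rcases Nat.mod_two_eq_zero_or_one m with hmp | hmp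
    · -- m even: q odd, ramp b value
      have hbv : b (k + 1) = m / d + 1 := by
        rw [hb]
        rw [if_neg (by push_neg; exact ⟨by rw [Nat.even_iff]; omega, by omega⟩)]
        rw [if_pos ⟨show d - 1 ≤ k + 1 by omega, show k + 1 < d - 1 + (h - 1) * d by omega⟩,
          ← hmdef]
      rw [hbv, if_pos hmp]
      push_cast
      ring
    · -- m odd: q even
      have hbv : b (k + 1) = 0 := by
        rw [hb, if_pos (Or.inl (by rw [Nat.even_iff]; omega))]
      rw [hbv, if_neg (show ¬ m % 2 = 0 by omega)]
      simp
  · -- crossover k + 1 = h * d - 1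
    obtain ⟨hk1, hk2⟩ := hk
    have h2 : 2 ≤ h := by
      by_contra hcon
      have hc1 : h = 1 := by omega
      rw [hc1, one_mul] at hk2
      omega
    have h2d : 2 * d ≤ h * d := mul_le_mul_left h2 d
    have hhd3 : h * d = 2 * (A * h) := by rw [hdA]; ring
    have hbv : b (k + 1) = h := by
      rw [hb]
      rw [if_neg (by push_neg; exact ⟨by rw [Nat.even_iff]; omega, by omega⟩)]
      rw [if_neg (by rintro ⟨-, hlt⟩; omega), if_neg]
      rintro ⟨i, hi, j, hj, hqe⟩
      have hiD : D ≤ i * D := by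
        have := mul_le_mul_left hi D
        rwa [one_mul] at this
      have hjd : j * d ≤ (h - 1) * d := mul_le_mul_left hj d
      omega
    have e2 : k + 1 - (d - 1) = (h - 1) * (2 * A) := by
      rw [← hdA]; omega
    have e3 : k - (d - 1) = (h - 1) * (2 * A) - 1 := by
      rw [← hdA]; omega
    have hG1 : GG d h D (k + 1) = FZ (2 * A) h D ((h - 1) * (2 * A)) := by
      unfold GG
      rw [if_neg (show ¬ k + 1 + 1 ≤ d - 1 by omega),
        if_neg (show ¬ k + 1 + 1 ≤ h * d - 1 by omega), e2, hdA]
    have hG0 : GG d h D k = (rampN (2 * A) ((h - 1) * (2 * A) - 1) : ℤ) := by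
      unfold GG
      rw [if_neg (show ¬ k + 1 ≤ d - 1 by omega),
        if_pos (show k + 1 ≤ h * d - 1 by omega), e3, hdA]
    rw [hG1, hG0, hbv, FZ_val A h D hA hh hD', ramp_val A h hA h2]
    push_cast
    ring
  · -- stable region
    set m := k - (d - 1) with hmdef
    have hm1 : k + 1 - (d - 1) = m + 1 := by omega
    have hmge : (h - 1) * (2 * A) ≤ m := by rw [← hdA]; omega
    have hG1 : GG d h D (k + 1) = FZ (2 * A) h D (m + 1) := by
      unfold GG
      rw [if_neg (show ¬ k + 1 + 1 ≤ d - 1 by omega),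
        if_neg (show ¬ k + 1 + 1 ≤ h * d - 1 by omega), hm1, hdA]
    have hG0 : GG d h D k = FZ (2 * A) h D m := by
      unfold GG
      rw [if_neg (show ¬ k + 1 ≤ d - 1 by omega),
        if_neg (show ¬ k + 1 ≤ h * d - 1 by omega), ← hmdef, hdA]
    rw [hG1, hG0, b_eval d h D hd heven hh hD b hb (k + 1) hk, hm1, hdA]
    exact FZ_step A h D hA hh hD' m hmge

open scoped Classical in
private lemma sum_eq (d h D : ℕ) (hd : 2 ≤ d) (heven : Even d) (hh : 1 ≤ h)
    (hD : D = d * (h + 1) - 2) (b : ℕ → ℕ)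
    (hb : ∀ q : ℕ, b q =
      if Even q ∨ q ≤ d - 2 then 0
      else if d - 1 ≤ q ∧ q < d - 1 + (h - 1) * d then (q - (d - 1)) / d + 1
      else if ∃ i : ℕ, 1 ≤ i ∧ ∃ j : ℕ, j ≤ h - 1 ∧ q = (d - 1) + i * D + j * d then h + 1
      else h) (k : ℕ) :
    (∑ q ∈ Finset.range (k + 1), (b q : ℤ)) = GG d h D k := by
  induction k with
  | zero =>
    rw [Finset.sum_range_one]
    have hb0 : b 0 = 0 := by rw [hb, if_pos (Or.inl Even.zero)]
    unfold GG
    rw [if_pos (show 0 + 1 ≤ d - 1 by omega), hb0]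
    simp
  | succ n ih =>
    rw [Finset.sum_range_succ, ih, GG_step d h D hd heven hh hD b hb n]

set_option maxHeartbeats 2000000 in
open scoped Classical in
/-- For even `d ≥ 2`, `h ≥ 1`, `D = d(h+1) - 2` and the Betti number
sequence `b` of the free loop space pair of a space with cohomology `T_{d,h+1}(x)`,
for every `k ≥ hd - 1` one has
`∑_{q=0}^k b_q = (h(h+1)d/(2D))(k-(d-1)) - h(h-1)d/4 + 1 + ε_{d,h}(k)`, where, with
`t = {(k-(d-1))/D}`,
`ε_{d,h}(k) = {(D/(hd))t} - (2/d + (d-2)/(hd))t - h{(D/2)t} - {(D/d)t}`. -/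
theorem stmt_5 (d h : ℕ) (hd : 2 ≤ d) (heven : Even d) (hh : 1 ≤ h)
    (D : ℕ) (hD : D = d * (h + 1) - 2) (b : ℕ → ℕ)
    (hb : ∀ q : ℕ, b q =
      if Even q ∨ q ≤ d - 2 then 0
      else if d - 1 ≤ q ∧ q < d - 1 + (h - 1) * d then (q - (d - 1)) / d + 1
      else if ∃ i : ℕ, 1 ≤ i ∧ ∃ j : ℕ, j ≤ h - 1 ∧ q = (d - 1) + i * D + j * d then h + 1
      else h) :
    ∀ k : ℕ, h * d - 1 ≤ k →
      ∀ t : ℝ, t = Int.fract (((k : ℝ) - ((d : ℝ) - 1)) / (D : ℝ)) →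
        ∑ q ∈ Finset.range (k + 1), (b q : ℝ)
          = ((h : ℝ) * ((h : ℝ) + 1) * (d : ℝ) / (2 * (D : ℝ))) * ((k : ℝ) - ((d : ℝ) - 1))
            - (h : ℝ) * ((h : ℝ) - 1) * (d : ℝ) / 4 + 1
            + (Int.fract ((D : ℝ) / ((h : ℝ) * (d : ℝ)) * t)
              - (2 / (d : ℝ) + ((d : ℝ) - 2) / ((h : ℝ) * (d : ℝ))) * t
              - (h : ℝ) * Int.fract ((D : ℝ) / 2 * t)
              - Int.fract ((D : ℝ) / (d : ℝ) * t)) := by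
  intro k hk t ht
  have hde : d % 2 = 0 := Nat.even_iff.mp heven
  obtain ⟨A, hdA⟩ : ∃ A, d = 2 * A := ⟨d / 2, by omega⟩
  have hA : 1 ≤ A := by omega
  have hDd : D + 2 = h * d + d := by
    have : d * (h + 1) = h * d + d := by ring
    omega
  have hhd2 : d ≤ h * d := by
    have := mul_le_mul_left hh d
    omega
  have hD0 : 0 < D := by omega
  have hd0 : 0 < d := by omega
  have hsum := sum_eq d h D hd heven hh hD b hb k
  set m := k - (d - 1) with hmdef
  have hGk : GG d h D k = FZ d h D m := by
    unfold GG
    rw [if_neg (show ¬ k + 1 ≤ d - 1 by omega), if_neg (show ¬ k + 1 ≤ h * d - 1 by omega),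
      ← hmdef]
  have hcast : (∑ q ∈ Finset.range (k + 1), (b q : ℝ))
      = ((∑ q ∈ Finset.range (k + 1), (b q : ℤ) : ℤ) : ℝ) := by
    push_cast; rfl
  rw [hcast, hsum, hGk]
  obtain ⟨q0, r, hqr, hrD⟩ : ∃ q0 r, m = D * q0 + r ∧ r < D :=
    ⟨m / D, m % D, (Nat.div_add_mod m D).symm, Nat.mod_lt _ hD0⟩
  have h1 : m / D = q0 := by
    rw [hqr, Nat.mul_add_div hD0, Nat.div_eq_of_lt hrD, add_zero]
  have h2 : m % D = r := by rw [hqr, Nat.mul_add_mod, Nat.mod_eq_of_lt hrD]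
  have hkd1 : d - 1 ≤ k := by omega
  have hmr : (k : ℝ) - ((d : ℝ) - 1) = (m : ℝ) := by
    have h5 : ((m : ℕ) : ℝ) = (k : ℝ) - ((d - 1 : ℕ) : ℝ) := by
      rw [hmdef, Nat.cast_sub hkd1]
    have h6 : ((d - 1 : ℕ) : ℝ) = (d : ℝ) - 1 := by
      rw [Nat.cast_sub (show 1 ≤ d by omega)]; norm_num
    rw [h5, h6]
  rw [ht, hmr, Int.fract_div_natCast_eq_div_natCast_mod, h2]
  have hDR : (D : ℝ) ≠ 0 := Nat.cast_ne_zero.2 (by omega)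
  have hdR : (d : ℝ) ≠ 0 := Nat.cast_ne_zero.2 (by omega)
  have hhR : (h : ℝ) ≠ 0 := Nat.cast_ne_zero.2 (by omega)
  have F1 : Int.fract ((D : ℝ) / ((h : ℝ) * (d : ℝ)) * ((r : ℝ) / (D : ℝ)))
      = ((r % (h * d) : ℕ) : ℝ) / ((h : ℝ) * (d : ℝ)) := by
    rw [show (D : ℝ) / ((h : ℝ) * (d : ℝ)) * ((r : ℝ) / (D : ℝ))
        = (r : ℝ) / (((h * d : ℕ)) : ℝ) by push_cast; field_simp,
      Int.fract_div_natCast_eq_div_natCast_mod]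
    push_cast; ring
  have F2 : Int.fract ((D : ℝ) / 2 * ((r : ℝ) / (D : ℝ))) = ((r % 2 : ℕ) : ℝ) / 2 := by
    rw [show (D : ℝ) / 2 * ((r : ℝ) / (D : ℝ)) = (r : ℝ) / (((2 : ℕ)) : ℝ) by
        push_cast; field_simp,
      Int.fract_div_natCast_eq_div_natCast_mod]
    push_cast; ring
  have F3 : Int.fract ((D : ℝ) / (d : ℝ) * ((r : ℝ) / (D : ℝ)))
      = ((r % d : ℕ) : ℝ) / (d : ℝ) := by
    rw [show (D : ℝ) / (d : ℝ) * ((r : ℝ) / (D : ℝ)) = (r : ℝ) / ((d : ℕ) : ℝ) by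
        field_simp,
      Int.fract_div_natCast_eq_div_natCast_mod]
  rw [F1, F2, F3]
  unfold FZ
  have hA2 : d / 2 = A := by omega
  rw [hA2, h1, h2]
  push_cast [-Int.natCast_div]
  have HM2 : ((r % 2 : ℕ) : ℝ) = (r : ℝ) - 2 * ((r / 2 : ℕ) : ℝ) := by
    have e := Nat.div_add_mod r 2
    have e2 : (2 : ℝ) * ((r / 2 : ℕ) : ℝ) + ((r % 2 : ℕ) : ℝ) = (r : ℝ) := by
      exact_mod_cast congrArg (Nat.cast : ℕ → ℝ) e
    linarith
  have HMd : ((r % d : ℕ) : ℝ) = (r : ℝ) - (d : ℝ) * ((r / d : ℕ) : ℝ) := by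
    have e := Nat.div_add_mod r d
    have e2 : (d : ℝ) * ((r / d : ℕ) : ℝ) + ((r % d : ℕ) : ℝ) = (r : ℝ) := by
      exact_mod_cast congrArg (Nat.cast : ℕ → ℝ) e
    linarith
  have HMhd : ((r % (h * d) : ℕ) : ℝ)
      = (r : ℝ) - (h : ℝ) * (d : ℝ) * ((r / (h * d) : ℕ) : ℝ) := by
    have e := Nat.div_add_mod r (h * d)
    have e2 : (h : ℝ) * (d : ℝ) * ((r / (h * d) : ℕ) : ℝ) + ((r % (h * d) : ℕ) : ℝ)
        = (r : ℝ) := by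
      exact_mod_cast congrArg (Nat.cast : ℕ → ℝ) e
    linarith
  have HmD : (m : ℝ) = (D : ℝ) * (q0 : ℝ) + (r : ℝ) := by
    exact_mod_cast congrArg (Nat.cast : ℕ → ℝ) hqr
  have H7' : ((h * (h - 1) / 2 : ℕ) : ℝ) = ((h : ℝ) * (h : ℝ) - (h : ℝ)) / 2 := by
    have e := two_mul_tri h
    have e2 : (2 : ℝ) * ((h * (h - 1) / 2 : ℕ) : ℝ) = (h : ℝ) * ((h : ℝ) - 1) := by
      have e3 := congrArg (Nat.cast : ℕ → ℝ) e
      push_cast [Nat.cast_sub hh] at e3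
      linarith
    linarith [e2]
  have H5' : (D : ℝ) = (h : ℝ) * (d : ℝ) + (d : ℝ) - 2 := by
    have e3 := congrArg (Nat.cast : ℕ → ℝ) hDd
    push_cast at e3
    linarith
  have H6' : (d : ℝ) = 2 * (A : ℝ) := by exact_mod_cast congrArg (Nat.cast : ℕ → ℝ) hdA
  have hDne : (h : ℝ) * (2 * (A : ℝ)) + 2 * (A : ℝ) - 2 ≠ 0 := by
    rw [← H6', ← H5']; exact hDR
  have hAR : (A : ℝ) ≠ 0 := Nat.cast_ne_zero.2 (by omega)
  have L1 : ((((r : ℕ) : ℤ) / 2 : ℤ) : ℝ) = ((r / 2 : ℕ) : ℝ) := by norm_cast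
  have L2 : ((((r : ℕ) : ℤ) / ((d : ℕ) : ℤ) : ℤ) : ℝ) = ((r / d : ℕ) : ℝ) := by norm_cast
  have L3 : ((((r : ℕ) : ℤ) / (((h : ℕ) : ℤ) * ((d : ℕ) : ℤ)) : ℤ) : ℝ)
      = ((r / (h * d) : ℕ) : ℝ) := by norm_cast
  have L4 : ((((h : ℕ) : ℤ) * (((h - 1 : ℕ)) : ℤ) / 2 : ℤ) : ℝ)
      = ((h * (h - 1) / 2 : ℕ) : ℝ) := by norm_cast
  rw [L1, L2, L3, L4, HM2, HMd, HMhd, HmD, H7', H5', H6']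
  have hDne2 : (-1 + (h : ℝ) * (A : ℝ) + (A : ℝ)) ≠ 0 := by
    intro hc; apply hDne; linarith
  field_simp
  have hinv : (-1 + (h : ℝ) * (A : ℝ) + (A : ℝ))⁻¹ * (-1 + (h : ℝ) * (A : ℝ) + (A : ℝ)) = 1 :=
    inv_mul_cancel₀ hDne2
  linear_combination (-(8 * (h : ℝ) ^ 2 * (A : ℝ) ^ 2 * (q0 : ℝ) + 8 * (h : ℝ) ^ 3 * (A : ℝ) ^ 2 * (q0 : ℝ)
    + 4 * (h : ℝ) * (r : ℝ) + 4 * (h : ℝ) ^ 2 * (A : ℝ) * (r : ℝ) - 4 * (r : ℝ))) * hinv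
end

section
/- Let d ≥ 2 be an even integer, h ≥ 1 an integer, D = d(h+1) − 2, and let b : ℕ → ℕ be the sequence defined by: b_q = 0 if q is even or q ≤ d−2; b_q = ⌊(q−(d−1))/d⌋ + 1 if q is odd and d−1 ≤ q < d−1+(h−1)d; b_q = h+1 if q is odd and q = (d−1) + iD + jd for some integers i ≥ 1 and 0 ≤ j ≤ h−1; and b_q = h for all other odd q ≥ hd−1. Then for every integer k ≥ hd−1 one has the strict inequality ∑_{q=0}^{k} b_q < h(D/2 + 1)·(k−(d−1))/D − h(h−1)d/4 + 2. -/
private lemma card_odd_filter_le (a n : ℕ) (ha : a % 2 = 1) :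
    ((Finset.range n).filter (fun q => Odd q ∧ a ≤ q)).card ≤ (n + 1 - a) / 2 := by
  induction n with
  | zero => simp
  | succ n ih =>
    rw [Finset.range_add_one, Finset.filter_insert]
    split_ifs with hn
    · rw [Finset.card_insert_of_notMem (by simp)]
      have hodd : n % 2 = 1 := Nat.odd_iff.mp hn.1
      have h2 := hn.2
      omega
    · exact le_trans ih (by omega)

private lemma gauss_int (n : ℕ) :
    2 * ∑ ℓ ∈ Finset.range n, ((ℓ : ℤ) + 1) = (n : ℤ) * (n + 1) := by
  induction n with
  | zero => simp
  | succ n ih =>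
    rw [Finset.sum_range_succ, mul_add, ih]
    push_cast
    ring

set_option maxHeartbeats 1600000 in
open scoped Classical in
/-- For even `d ≥ 2`, `h ≥ 1`, `D = d(h+1) - 2` and the Betti number
sequence `b` of the free loop space pair of a space with cohomology `T_{d,h+1}(x)`,
for every `k ≥ hd - 1` one has the strict inequality
`∑_{q=0}^k b_q < h(D/2 + 1)(k-(d-1))/D - h(h-1)d/4 + 2`. -/
theorem stmt_6 (d h : ℕ) (hd : 2 ≤ d) (heven : Even d) (hh : 1 ≤ h)
    (D : ℕ) (hD : D = d * (h + 1) - 2) (b : ℕ → ℕ)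
    (hb : ∀ q : ℕ, b q =
      if Even q ∨ q ≤ d - 2 then 0
      else if d - 1 ≤ q ∧ q < d - 1 + (h - 1) * d then (q - (d - 1)) / d + 1
      else if ∃ i : ℕ, 1 ≤ i ∧ ∃ j : ℕ, j ≤ h - 1 ∧ q = (d - 1) + i * D + j * d then h + 1
      else h) :
    ∀ k : ℕ, h * d - 1 ≤ k →
      ∑ q ∈ Finset.range (k + 1), (b q : ℝ)
        < (h : ℝ) * ((D : ℝ) / 2 + 1) * (((k : ℝ) - ((d : ℝ) - 1)) / (D : ℝ))
          - (h : ℝ) * ((h : ℝ) - 1) * (d : ℝ) / 4 + 2 := by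
  intro k hk
  classical
  have hd0 : 0 < d := by omega
  have hdh4 : 4 ≤ d * (h + 1) := by
    calc (4:ℕ) = 2 * 2 := rfl
      _ ≤ d * (h + 1) := Nat.mul_le_mul hd (by omega)
  have hD2 : 2 ≤ D := by omega
  have hD0 : 0 < D := by omega
  have hkd : h * d ≤ k + 1 := by omega
  have hhd1 : (h - 1) * d + d = h * d := by
    have e : (h - 1 + 1) * d = (h - 1) * d + d := by ring
    have e2 : h - 1 + 1 = h := by omega
    rw [e2] at e; omega
  set c : ℕ → ℕ := fun q => if Odd q ∧ d - 1 ≤ q then min h ((q - (d - 1)) / d + 1) else 0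
    with hc
  set s : ℕ → ℕ := fun q =>
    if ∃ i : ℕ, 1 ≤ i ∧ ∃ j : ℕ, j ≤ h - 1 ∧ q = (d - 1) + i * D + j * d then 1 else 0
    with hs
  -- pointwise bound
  have hpt : ∀ q, b q ≤ c q + s q := by
    intro q
    rw [hb q]
    split_ifs with h1 h2 h3
    · exact Nat.zero_le _
    · -- region A
      have hodd : Odd q := Nat.not_even_iff_odd.mp (fun he => h1 (Or.inl he))
      have hq1 : d - 1 ≤ q := by omega
      have hlt : q - (d - 1) < (h - 1) * d := by omega
      have hvle : (q - (d - 1)) / d + 1 ≤ h := by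
        have hlt' : q - (d - 1) < d * (h - 1) := by rw [mul_comm] at hlt; exact hlt
        have := Nat.div_lt_of_lt_mul hlt'
        omega
      have : c q = (q - (d - 1)) / d + 1 := by
        rw [hc]; simp only [if_pos (⟨hodd, hq1⟩ : Odd q ∧ d - 1 ≤ q)]
        exact min_eq_right hvle
      omega
    · -- special q
      have hodd : Odd q := Nat.not_even_iff_odd.mp (fun he => h1 (Or.inl he))
      have hq1 : d - 1 ≤ q := by omega
      have hge : (h - 1) * d ≤ q - (d - 1) := by omega
      have hdivge : h - 1 ≤ (q - (d - 1)) / d :=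
        (Nat.le_div_iff_mul_le hd0).mpr hge
      have hcq : c q = h := by
        rw [hc]; simp only [if_pos (⟨hodd, hq1⟩ : Odd q ∧ d - 1 ≤ q)]
        exact min_eq_left (by omega)
      have hsq : s q = 1 := by rw [hs]; simp only [if_pos h3]
      omega
    · -- generic tail
      have hodd : Odd q := Nat.not_even_iff_odd.mp (fun he => h1 (Or.inl he))
      have hq1 : d - 1 ≤ q := by omega
      have hge : (h - 1) * d ≤ q - (d - 1) := by omega
      have hdivge : h - 1 ≤ (q - (d - 1)) / d :=
        (Nat.le_div_iff_mul_le hd0).mpr hge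
      have hcq : c q = h := by
        rw [hc]; simp only [if_pos (⟨hodd, hq1⟩ : Odd q ∧ d - 1 ≤ q)]
        exact min_eq_left (by omega)
      omega
  set B : ℕ := ∑ q ∈ Finset.range (k + 1), b q with hBdef
  set C : ℕ := ∑ q ∈ Finset.range (k + 1), c q with hCdef
  set N : ℕ := ∑ q ∈ Finset.range (k + 1), s q with hNdef
  have hB : B ≤ C + N := by
    rw [hBdef, hCdef, hNdef, ← Finset.sum_add_distrib]
    exact Finset.sum_le_sum fun q _ => hpt q
  -- ============ Task B : bound on C ============
  have hCb : 4 * (C : ℤ) ≤ (h : ℤ) * (2 * k + 6) - d * (h * (h + 1)) := by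
    have hcb : ∀ q, c q ≤ ∑ ℓ ∈ Finset.range h,
        (if Odd q ∧ (ℓ + 1) * d - 1 ≤ q then 1 else 0) := by
      intro q
      by_cases hq : Odd q ∧ d - 1 ≤ q
      · have hcq : c q = min h ((q - (d - 1)) / d + 1) := by rw [hc]; simp [hq]
        have hcard : ∑ ℓ ∈ Finset.range h, (if Odd q ∧ (ℓ + 1) * d - 1 ≤ q then 1 else 0)
            = ((Finset.range h).filter (fun ℓ => Odd q ∧ (ℓ + 1) * d - 1 ≤ q)).card := by
          rw [Finset.card_filter]
        rw [hcq, hcard]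
        have hsub : Finset.range (min h ((q - (d - 1)) / d + 1)) ⊆
            (Finset.range h).filter (fun ℓ => Odd q ∧ (ℓ + 1) * d - 1 ≤ q) := by
          intro ℓ hl
          rw [Finset.mem_range] at hl
          rw [Finset.mem_filter, Finset.mem_range]
          refine ⟨by omega, hq.1, ?_⟩
          have hld : ℓ ≤ (q - (d - 1)) / d := by omega
          have hmul : ℓ * d ≤ q - (d - 1) := (Nat.le_div_iff_mul_le hd0).mp hld
          have he : (ℓ + 1) * d = ℓ * d + d := by ring
          omega
        calc min h ((q - (d - 1)) / d + 1)
            = (Finset.range (min h ((q - (d - 1)) / d + 1))).card :=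
              (Finset.card_range _).symm
          _ ≤ _ := Finset.card_le_card hsub
      · have : c q = 0 := if_neg hq
        rw [this]; exact Nat.zero_le _
    have hsum : C ≤ ∑ ℓ ∈ Finset.range h,
        ((Finset.range (k + 1)).filter (fun q => Odd q ∧ (ℓ + 1) * d - 1 ≤ q)).card := by
      calc C ≤ ∑ q ∈ Finset.range (k + 1), ∑ ℓ ∈ Finset.range h,
            (if Odd q ∧ (ℓ + 1) * d - 1 ≤ q then 1 else 0) :=
            Finset.sum_le_sum fun q _ => hcb q
        _ = ∑ ℓ ∈ Finset.range h, ∑ q ∈ Finset.range (k + 1),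
            (if Odd q ∧ (ℓ + 1) * d - 1 ≤ q then 1 else 0) := Finset.sum_comm
        _ = _ := by
            refine Finset.sum_congr rfl fun ℓ _ => ?_
            rw [Finset.card_filter]
    have hperl : ∀ ℓ ∈ Finset.range h,
        (4 * ((((Finset.range (k + 1)).filter
            (fun q => Odd q ∧ (ℓ + 1) * d - 1 ≤ q)).card : ℤ)))
          ≤ 2 * (k : ℤ) + 6 - 2 * ((ℓ : ℤ) + 1) * d := by
      intro ℓ hℓ
      rw [Finset.mem_range] at hℓ
      have ha2 : ((ℓ + 1) * d) % 2 = 0 := by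
        rcases heven with ⟨e, he⟩
        have : (ℓ + 1) * d = (ℓ + 1) * e * 2 := by rw [he]; ring
        omega
      have had : 2 ≤ (ℓ + 1) * d := le_trans hd (Nat.le_mul_of_pos_left d (by omega))
      have haodd : ((ℓ + 1) * d - 1) % 2 = 1 := by omega
      have hle : (ℓ + 1) * d ≤ k + 1 :=
        le_trans (Nat.mul_le_mul_right d (by omega)) hkd
      have hcount := card_odd_filter_le ((ℓ + 1) * d - 1) (k + 1) haodd
      have hnat : 4 * ((Finset.range (k + 1)).filter
          (fun q => Odd q ∧ (ℓ + 1) * d - 1 ≤ q)).card + 2 * ((ℓ + 1) * d)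
            ≤ 2 * k + 6 := by omega
      have := (Nat.cast_le (α := ℤ)).mpr hnat
      push_cast at this
      linarith
    have h4C : 4 * (C : ℤ) ≤ ∑ ℓ ∈ Finset.range h,
        (2 * (k : ℤ) + 6 - 2 * ((ℓ : ℤ) + 1) * d) := by
      have h1 : (C : ℤ) ≤ ∑ ℓ ∈ Finset.range h,
          ((((Finset.range (k + 1)).filter
            (fun q => Odd q ∧ (ℓ + 1) * d - 1 ≤ q)).card : ℤ)) := by
        exact_mod_cast hsum
      calc 4 * (C : ℤ) ≤ 4 * ∑ ℓ ∈ Finset.range h,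
            ((((Finset.range (k + 1)).filter
              (fun q => Odd q ∧ (ℓ + 1) * d - 1 ≤ q)).card : ℤ)) := by linarith
        _ = ∑ ℓ ∈ Finset.range h, 4 * ((((Finset.range (k + 1)).filter
              (fun q => Odd q ∧ (ℓ + 1) * d - 1 ≤ q)).card : ℤ)) := Finset.mul_sum _ _ _
        _ ≤ _ := Finset.sum_le_sum hperl
    have hcomp : ∑ ℓ ∈ Finset.range h, (2 * (k : ℤ) + 6 - 2 * ((ℓ : ℤ) + 1) * d)
        = (h : ℤ) * (2 * k + 6) - d * (h * (h + 1)) := by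
      rw [Finset.sum_sub_distrib, Finset.sum_const, Finset.card_range]
      have e1 : ∑ ℓ ∈ Finset.range h, 2 * ((ℓ : ℤ) + 1) * d
          = d * (2 * ∑ ℓ ∈ Finset.range h, ((ℓ : ℤ) + 1)) := by
        rw [Finset.mul_sum, Finset.mul_sum]
        exact Finset.sum_congr rfl fun ℓ _ => by ring
      rw [e1, gauss_int h, nsmul_eq_mul]
    rw [hcomp] at h4C
    exact h4C
  -- ============ Task C : bound on N ============
  have hNb : (D : ℤ) * N + d * h * ((h : ℤ) - 1) ≤ h * ((k : ℤ) + 1 - d) := by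
    have hNcard : N = ((Finset.range (k + 1)).filter
        (fun q => ∃ i : ℕ, 1 ≤ i ∧ ∃ j : ℕ, j ≤ h - 1 ∧ q = (d - 1) + i * D + j * d)).card := by
      rw [hNdef, Finset.card_filter]
    set K : ℕ := k + 1 - d with hK
    have hKge : (h - 1) * d ≤ K := by omega
    have hjdlt : ∀ j : ℕ, j ≤ h - 1 → j * d < D := by
      intro j hj
      have e1 : (j + 2) * d = j * d + 2 * d := by ring
      have e2 : (j + 2) * d ≤ (h + 1) * d := Nat.mul_le_mul_right d (by omega)
      have e3 : (h + 1) * d = d * (h + 1) := by ring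
      omega
    have hrep : ∀ i j : ℕ, 1 ≤ i → j ≤ h - 1 →
        ((d - 1) + i * D + j * d - (d - 1)) / D = i ∧
        (((d - 1) + i * D + j * d - (d - 1)) % D) / d = j := by
      intro i j hi hj
      have hsub : (d - 1) + i * D + j * d - (d - 1) = j * d + D * i := by
        have : i * D = D * i := mul_comm _ _
        omega
      rw [hsub]
      constructor
      · rw [Nat.add_mul_div_left _ _ hD0, Nat.div_eq_of_lt (hjdlt j hj), Nat.zero_add]
      · rw [Nat.add_mul_mod_self_left, Nat.mod_eq_of_lt (hjdlt j hj),
          Nat.mul_div_cancel _ hd0]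
    set I : ℕ := K / D with hI
    by_cases hI0 : I = 0
    · -- no specials at all
      have hempty : ((Finset.range (k + 1)).filter
          (fun q => ∃ i : ℕ, 1 ≤ i ∧ ∃ j : ℕ, j ≤ h - 1 ∧ q = (d - 1) + i * D + j * d))
            = ∅ := by
        rw [Finset.eq_empty_iff_forall_notMem]
        intro q hq
        rw [Finset.mem_filter, Finset.mem_range] at hq
        obtain ⟨hqk, i, hi, j, hj, hqe⟩ := hq
        have hiDle : D ≤ i * D := Nat.le_mul_of_pos_left D (by omega)
        have hKD : K < D := by
          have h' : K / D = 0 := hI.symm.trans hI0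
          exact (Nat.div_eq_zero_iff.mp h').resolve_left (by omega)
        omega
      have hN0 : N = 0 := by rw [hNcard, hempty]; simp
      rw [hN0]
      have hdK : (d : ℤ) * ((h : ℤ) - 1) ≤ ((k : ℤ) + 1 - d) := by
        have h1 : (h - 1) * d ≤ K := hKge
        have h2 := (Nat.cast_le (α := ℤ)).mpr h1
        have h3 : (((h - 1) * d : ℕ) : ℤ) = ((h : ℤ) - 1) * d := by
          push_cast [Nat.cast_sub hh]; ring
        have h4 : ((K : ℕ) : ℤ) = (k : ℤ) + 1 - d := by
          rw [hK]; push_cast [Nat.cast_sub (show d ≤ k + 1 by omega)]; ring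
        rw [h3, h4] at h2
        linarith
      have h5 := mul_le_mul_of_nonneg_left hdK (show (0 : ℤ) ≤ h by positivity)
      push_cast
      linarith only [h5]
    · -- I ≥ 1
      set r : ℕ := K % D with hr
      have hIr : K = I * D + r := (Nat.div_add_mod' K D).symm
      have hrD : r < D := Nat.mod_lt _ hD0
      -- injection into pairs
      have hNle : N ≤ (I - 1) * h + min h (r / d + 1) := by
        have hmaps : ∀ q ∈ (Finset.range (k + 1)).filter
            (fun q => ∃ i : ℕ, 1 ≤ i ∧ ∃ j : ℕ, j ≤ h - 1 ∧ q = (d - 1) + i * D + j * d),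
            (((q - (d - 1)) / D, ((q - (d - 1)) % D) / d) : ℕ × ℕ) ∈
              (Finset.Icc 1 (I - 1) ×ˢ Finset.range h) ∪
              ({I} ×ˢ ((Finset.range h).filter (fun j => j * d ≤ r))) := by
          intro q hq
          rw [Finset.mem_filter, Finset.mem_range] at hq
          obtain ⟨hqk, i, hi, j, hj, hqe⟩ := hq
          have hre := hrep i j hi hj
          rw [← hqe] at hre
          rw [hre.1, hre.2]
          have hle : i * D + j * d ≤ K := by omega
          have hiI : i ≤ I := by
            rw [hI]
            exact (Nat.le_div_iff_mul_le hD0).mpr (by omega)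
          rcases Nat.lt_or_ge i I with hlt | hge
          · apply Finset.mem_union_left
            rw [Finset.mem_product, Finset.mem_Icc, Finset.mem_range]
            exact ⟨⟨hi, by omega⟩, by omega⟩
          · have hiEq : i = I := by omega
            apply Finset.mem_union_right
            rw [hiEq] at hle
            have hjh : j < h := by omega
            have hjr : j * d ≤ r := by omega
            rw [Finset.mem_product, Finset.mem_singleton, Finset.mem_filter,
              Finset.mem_range]
            exact ⟨hiEq, hjh, hjr⟩
        have hinj : ∀ q ∈ (Finset.range (k + 1)).filter
            (fun q => ∃ i : ℕ, 1 ≤ i ∧ ∃ j : ℕ, j ≤ h - 1 ∧ q = (d - 1) + i * D + j * d),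
            ∀ q' ∈ (Finset.range (k + 1)).filter
            (fun q => ∃ i : ℕ, 1 ≤ i ∧ ∃ j : ℕ, j ≤ h - 1 ∧ q = (d - 1) + i * D + j * d),
            (((q - (d - 1)) / D, ((q - (d - 1)) % D) / d) : ℕ × ℕ)
              = ((q' - (d - 1)) / D, ((q' - (d - 1)) % D) / d) → q = q' := by
          intro q hq q' hq' heq
          rw [Finset.mem_filter] at hq hq'
          obtain ⟨-, i, hi, j, hj, hqe⟩ := hq
          obtain ⟨-, i', hi', j', hj', hqe'⟩ := hq'
          have h1 := hrep i j hi hj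
          have h2 := hrep i' j' hi' hj'
          rw [← hqe] at h1
          rw [← hqe'] at h2
          rw [h1.1, h1.2, h2.1, h2.2] at heq
          have : i = i' ∧ j = j' := by
            constructor <;> [exact congrArg Prod.fst heq; exact congrArg Prod.snd heq]
          rw [hqe, hqe', this.1, this.2]
        have hcard := Finset.card_le_card_of_injOn _ hmaps hinj
        rw [← hNcard] at hcard
        refine le_trans hcard (le_trans (Finset.card_union_le _ _) ?_)
        have hc1 : (Finset.Icc 1 (I - 1) ×ˢ Finset.range h).card = (I - 1) * h := by
          rw [Finset.card_product, Nat.card_Icc, Finset.card_range]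
          have e : I - 1 + 1 - 1 = I - 1 := by omega
          rw [e]
        have hc2 : ({I} ×ˢ ((Finset.range h).filter (fun j => j * d ≤ r))).card
            ≤ min h (r / d + 1) := by
          rw [Finset.card_product, Finset.card_singleton, one_mul]
          have hsub : ((Finset.range h).filter (fun j => j * d ≤ r)) ⊆
              Finset.range (min h (r / d + 1)) := by
            intro j hj
            rw [Finset.mem_filter, Finset.mem_range] at hj
            rw [Finset.mem_range]
            have : j ≤ r / d := (Nat.le_div_iff_mul_le hd0).mpr hj.2
            omega
          calc ((Finset.range h).filter (fun j => j * d ≤ r)).card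
              ≤ (Finset.range (min h (r / d + 1))).card := Finset.card_le_card hsub
            _ = min h (r / d + 1) := Finset.card_range _
        omega
      -- arithmetic finish
      have hI1 : 1 ≤ I := Nat.one_le_iff_ne_zero.mpr hI0
      have hsd : (r / d) * d ≤ r := Nat.div_mul_le_self r d
      -- cast everything
      have hKZ : ((K : ℕ) : ℤ) = (k : ℤ) + 1 - d := by
        rw [hK]; push_cast [Nat.cast_sub (show d ≤ k + 1 by omega)]; ring
      have hIrZ : ((k : ℤ) + 1 - d) = (I : ℤ) * D + r := by
        rw [← hKZ]; exact_mod_cast congrArg (Nat.cast : ℕ → ℤ) hIr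
      have hDZ : (D : ℤ) = d * h + d - 2 := by
        have : ((D : ℕ) : ℤ) = ((d * (h + 1) - 2 : ℕ) : ℤ) := by rw [hD]
        rw [this, Nat.cast_sub (by omega)]
        push_cast; ring
      set sq : ℕ := r / d with hsq
      have hNleZ : (N : ℤ) ≤ ((I : ℤ) - 1) * h + min (h : ℤ) ((sq : ℤ) + 1) := by
        have h0 := (Nat.cast_le (α := ℤ)).mpr hNle
        push_cast [Nat.cast_min, Nat.cast_sub hI1] at h0
        exact h0
      have hsdZ : (sq : ℤ) * d ≤ (r : ℤ) := by exact_mod_cast hsd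
      have hrDZ : (r : ℤ) < D := by exact_mod_cast hrD
      have hI1Z : (1 : ℤ) ≤ I := by exact_mod_cast hI1
      have hDnn : (0 : ℤ) ≤ D := by positivity
      have hhnn : (0 : ℤ) ≤ h := by positivity
      have hd2 : (2 : ℤ) ≤ d := by exact_mod_cast hd
      have hh1 : (1 : ℤ) ≤ h := by exact_mod_cast hh
      rcases le_or_gt (h : ℤ) ((sq : ℤ) + 1) with hmin | hmin
      · -- min = h ; then h-1 ≤ sq so (h-1)*d ≤ r
        have hminEq : min (h : ℤ) ((sq : ℤ) + 1) = h := min_eq_left hmin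
        have hNZ : (N : ℤ) ≤ (I : ℤ) * h := by
          rw [hminEq] at hNleZ
          have : ((I : ℤ) - 1) * h + h = I * h := by ring
          linarith
        have hrge : ((h : ℤ) - 1) * d ≤ r := by
          have h1 : ((h : ℤ) - 1) * d ≤ (sq : ℤ) * d :=
            mul_le_mul_of_nonneg_right (by linarith only [hmin]) (by linarith only [hd2])
          linarith only [h1, hsdZ]
        rw [hIrZ]
        have p1 := mul_le_mul_of_nonneg_left hNZ hDnn
        have p2 := mul_le_mul_of_nonneg_left hrge hhnn
        linarith only [p1, p2]
      · -- min = sq + 1, sq ≤ h - 1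
        have hminEq : min (h : ℤ) ((sq : ℤ) + 1) = (sq : ℤ) + 1 := min_eq_right (by omega)
        have hNZ : (N : ℤ) ≤ ((I : ℤ) - 1) * h + sq + 1 := by
          rw [hminEq] at hNleZ; linarith only [hNleZ]
        have hsh : (sq : ℤ) ≤ (h : ℤ) - 1 := by omega
        rw [hIrZ]
        have p1 := mul_le_mul_of_nonneg_left hNZ hDnn
        have p2 := mul_le_mul_of_nonneg_left hsdZ hhnn
        have hpos : (0 : ℤ) ≤ ((h : ℤ) - 1 - sq) * ((d : ℤ) - 2) :=
          mul_nonneg (by linarith only [hsh]) (by linarith only [hd2])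
        have hiden : (h : ℤ) * ((I : ℤ) * D) + (h : ℤ) * ((sq : ℤ) * d)
            - (D : ℤ) * (((I : ℤ) - 1) * h + sq + 1) - (d : ℤ) * h * ((h : ℤ) - 1)
            = ((h : ℤ) - 1 - sq) * ((d : ℤ) - 2) := by rw [hDZ]; ring
        linarith only [p1, p2, hpos, hiden]
  -- ============ assemble over ℤ ============
  have hDZ : (D : ℤ) = d * h + d - 2 := by
    have : ((D : ℕ) : ℤ) = ((d * (h + 1) - 2 : ℕ) : ℤ) := by rw [hD]
    rw [this, Nat.cast_sub (by omega)]
    push_cast; ring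
  have key : 4 * (D : ℤ) * B < 2 * h * ((D : ℤ) + 2) * ((k : ℤ) + 1 - d)
      - (D : ℤ) * (d * h * ((h : ℤ) - 1)) + 8 * D := by
    have hBZ : (B : ℤ) ≤ (C : ℤ) + N := by exact_mod_cast hB
    have hDnn : (0 : ℤ) ≤ D := by positivity
    have h1 : 4 * (D : ℤ) * B ≤ 4 * D * ((C : ℤ) + N) := by
      have := mul_le_mul_of_nonneg_left hBZ (show (0 : ℤ) ≤ 4 * D by positivity)
      linarith
    have h2 : (D : ℤ) * (4 * C) ≤ (D : ℤ) * ((h : ℤ) * (2 * k + 6) - d * (h * (h + 1))) :=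
      mul_le_mul_of_nonneg_left hCb hDnn
    have h3 : 4 * ((D : ℤ) * N) ≤ 4 * ((h : ℤ) * ((k : ℤ) + 1 - d) - d * h * ((h : ℤ) - 1)) := by
      linarith only [hNb]
    have hd2 : (2 : ℤ) ≤ d := by exact_mod_cast hd
    have hh1 : (1 : ℤ) ≤ h := by exact_mod_cast hh
    have hiden : (D : ℤ) * ((h : ℤ) * (2 * k + 6) - d * (h * (h + 1)))
        + 4 * ((h : ℤ) * ((k : ℤ) + 1 - d) - d * h * ((h : ℤ) - 1))
        + (8 * (d : ℤ) + 8 * h - 16)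
        = 2 * h * ((D : ℤ) + 2) * ((k : ℤ) + 1 - d)
          - (D : ℤ) * (d * h * ((h : ℤ) - 1)) + 8 * D := by rw [hDZ]; ring
    linarith only [h1, h2, h3, hiden, hd2, hh1]
  -- ============ conclude over ℝ ============
  have hDR : (0 : ℝ) < D := by exact_mod_cast hD0
  have keyR : 4 * (D : ℝ) * (B : ℝ) < 2 * h * ((D : ℝ) + 2) * ((k : ℝ) + 1 - d)
      - (D : ℝ) * (d * h * ((h : ℝ) - 1)) + 8 * D := by exact_mod_cast key
  have hgoal : (B : ℝ) < (h : ℝ) * ((D : ℝ) / 2 + 1) * (((k : ℝ) - ((d : ℝ) - 1)) / (D : ℝ))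
      - (h : ℝ) * ((h : ℝ) - 1) * (d : ℝ) / 4 + 2 := by
    rw [show (h : ℝ) * ((D : ℝ) / 2 + 1) * (((k : ℝ) - ((d : ℝ) - 1)) / (D : ℝ))
        - (h : ℝ) * ((h : ℝ) - 1) * (d : ℝ) / 4 + 2
        = (2 * h * ((D : ℝ) + 2) * ((k : ℝ) + 1 - d)
          - (D : ℝ) * (d * h * ((h : ℝ) - 1)) + 8 * D) / (4 * D) from by
      field_simp
      ring]
    rw [lt_div_iff₀ (by positivity)]
    linarith only [keyR]
  calc ∑ q ∈ Finset.range (k + 1), (b q : ℝ) = (B : ℝ) := by rw [hBdef]; push_cast; rfl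
    _ < _ := hgoal
end

section
/- Let d ≥ 2 be an even integer, h ≥ 1 an integer, and D = d(h+1) − 2. For an integer k set t = {(k−(d−1))/D} and ε_{d,h}(k) = {(D/(hd))·t} − (2/d + (d−2)/(hd))·t − h·{(D/2)·t} − {(D/d)·t}. Then for every integer k ≥ d−1 one has −(h+2) < ε_{d,h}(k) < 1, and in the case h = 1 one has −2 < ε_{d,1}(k) ≤ 0. -/
/-- For even `d ≥ 2`, `h ≥ 1`, `D = d(h+1) - 2`, and every integer
`k ≥ d - 1`, the quantity `ε_{d,h}(k)` (defined with `t = {(k-(d-1))/D}` as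
`{(D/(hd))t} - (2/d + (d-2)/(hd))t - h{(D/2)t} - {(D/d)t}`) satisfies
`-(h+2) < ε_{d,h}(k) < 1`, and if `h = 1` also `-2 < ε_{d,1}(k) ≤ 0`. -/
theorem stmt_7 (d h : ℕ) (hd : 2 ≤ d) (heven : Even d) (hh : 1 ≤ h)
    (D : ℕ) (hD : D = d * (h + 1) - 2) :
    ∀ k : ℕ, d - 1 ≤ k →
      ∀ t ε : ℝ, t = Int.fract (((k : ℝ) - ((d : ℝ) - 1)) / (D : ℝ)) →
        ε = Int.fract ((D : ℝ) / ((h : ℝ) * (d : ℝ)) * t)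
            - (2 / (d : ℝ) + ((d : ℝ) - 2) / ((h : ℝ) * (d : ℝ))) * t
            - (h : ℝ) * Int.fract ((D : ℝ) / 2 * t)
            - Int.fract ((D : ℝ) / (d : ℝ) * t) →
        (-((h : ℝ) + 2) < ε ∧ ε < 1) ∧ (h = 1 → -2 < ε ∧ ε ≤ 0) := by
  intro k hk t ε ht hε
  have hdR : (2 : ℝ) ≤ (d : ℝ) := by exact_mod_cast hd
  have hhR : (1 : ℝ) ≤ (h : ℝ) := by exact_mod_cast hh
  have hd0 : (0 : ℝ) < (d : ℝ) := by linarith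
  have hh0 : (0 : ℝ) < (h : ℝ) := by linarith
  have ht0 : 0 ≤ t := ht ▸ Int.fract_nonneg _
  have ht1 : t < 1 := ht ▸ Int.fract_lt_one _
  have f1_0 : 0 ≤ Int.fract ((D : ℝ) / ((h : ℝ) * (d : ℝ)) * t) := Int.fract_nonneg _
  have f1_1 : Int.fract ((D : ℝ) / ((h : ℝ) * (d : ℝ)) * t) < 1 := Int.fract_lt_one _
  have f2_0 : 0 ≤ Int.fract ((D : ℝ) / 2 * t) := Int.fract_nonneg _
  have f2_1 : Int.fract ((D : ℝ) / 2 * t) < 1 := Int.fract_lt_one _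
  have f3_0 : 0 ≤ Int.fract ((D : ℝ) / (d : ℝ) * t) := Int.fract_nonneg _
  have f3_1 : Int.fract ((D : ℝ) / (d : ℝ) * t) < 1 := Int.fract_lt_one _
  have hhd0 : (0 : ℝ) < (h : ℝ) * (d : ℝ) := by positivity
  have hc0 : 0 ≤ 2 / (d : ℝ) + ((d : ℝ) - 2) / ((h : ℝ) * (d : ℝ)) := by
    apply add_nonneg
    · positivity
    · apply div_nonneg (by linarith) (le_of_lt hhd0)
  have hc1 : 2 / (d : ℝ) + ((d : ℝ) - 2) / ((h : ℝ) * (d : ℝ)) ≤ 1 := by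
    rw [div_add_div _ _ (ne_of_gt hd0) (ne_of_gt hhd0), div_le_one (by positivity)]
    nlinarith [mul_nonneg (sub_nonneg.mpr hhR) (sub_nonneg.mpr hdR)]
  have hct1 : (2 / (d : ℝ) + ((d : ℝ) - 2) / ((h : ℝ) * (d : ℝ))) * t < 1 := by
    nlinarith
  have hct0 : 0 ≤ (2 / (d : ℝ) + ((d : ℝ) - 2) / ((h : ℝ) * (d : ℝ))) * t :=
    mul_nonneg hc0 ht0
  have hhf2_0 : 0 ≤ (h : ℝ) * Int.fract ((D : ℝ) / 2 * t) :=
    mul_nonneg (le_of_lt hh0) f2_0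
  have hhf2_1 : (h : ℝ) * Int.fract ((D : ℝ) / 2 * t) ≤ (h : ℝ) := by
    nlinarith
  refine ⟨⟨by rw [hε]; linarith, by rw [hε]; linarith⟩, ?_⟩
  intro h1
  subst h1
  have hcast : ((1 : ℕ) : ℝ) = 1 := by norm_num
  rw [hcast] at hε
  have hcoef : 2 / (d : ℝ) + ((d : ℝ) - 2) / (d : ℝ) = 1 := by
    field_simp
    ring
  simp only [one_mul] at hε
  rw [hcoef, one_mul] at hε
  have hε' : ε = -t - Int.fract ((D : ℝ) / 2 * t) := by rw [hε]; ring
  rw [hε']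
  constructor <;> linarith
end

section
/- Let d ≥ 2 be an even integer, h ≥ 1 an integer, D = d(h+1) − 2, and define ε : ℝ → ℝ by ε(x) = {x/(dh)} − (2/d + (d−2)/(dh))·(x/D) − {x/d}. Then for every even integer x with 0 ≤ x ≤ dh−2 one has ε(x) < (dh−(d−2))/(dh+(d−2)). -/
/-- For even `d ≥ 2`, `h ≥ 1`, `D = d(h+1) - 2` and
`ε(x) = {x/(dh)} - (2/d + (d-2)/(dh))(x/D) - {x/d}`, for every even integer `x`
with `0 ≤ x ≤ dh - 2` one has `ε(x) < (dh - (d-2))/(dh + (d-2))`. -/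
theorem stmt_10 (d h : ℕ) (hd : 2 ≤ d) (heven : Even d) (hh : 1 ≤ h)
    (D : ℕ) (hD : D = d * (h + 1) - 2) (ε : ℝ → ℝ)
    (hε : ∀ x : ℝ, ε x = Int.fract (x / ((d : ℝ) * (h : ℝ)))
        - (2 / (d : ℝ) + ((d : ℝ) - 2) / ((d : ℝ) * (h : ℝ))) * (x / (D : ℝ))
        - Int.fract (x / (d : ℝ))) :
    ∀ x : ℕ, Even x → x ≤ d * h - 2 →
      ε (x : ℝ) < ((d : ℝ) * (h : ℝ) - ((d : ℝ) - 2)) / ((d : ℝ) * (h : ℝ) + ((d : ℝ) - 2)) := by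
  intro x hxe hxle
  have hd0 : 0 < d := by omega
  have hh0 : 0 < h := hh
  have hdh2 : 2 ≤ d * h := le_trans hd (Nat.le_mul_of_pos_right d hh0)
  have hxlt : x < d * h := by omega
  set q := x / d with hq
  set r := x % d with hr
  have hxqr : x = q * d + r := (Nat.div_add_mod' x d).symm
  have hrd : r < d := Nat.mod_lt x hd0
  have hqh : q < h := by
    rw [hq, Nat.div_lt_iff_lt_mul hd0]
    calc x < d * h := hxlt
    _ = h * d := Nat.mul_comm d h
  -- real versions
  have hdR : (2:ℝ) ≤ (d:ℝ) := by exact_mod_cast hd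
  have hhR : (1:ℝ) ≤ (h:ℝ) := by exact_mod_cast hh
  have hdR0 : (0:ℝ) < (d:ℝ) := by positivity
  have hhR0 : (0:ℝ) < (h:ℝ) := by exact_mod_cast hh0
  have hDR : (D:ℝ) = (d:ℝ) * (h:ℝ) + (d:ℝ) - 2 := by
    have : D = d * h + d - 2 := by rw [hD]; ring_nf
    have h2 : 2 ≤ d * h + d := by omega
    rw [this]
    push_cast [Nat.cast_sub h2]
    ring
  have hDR0 : (0:ℝ) < (D:ℝ) := by
    rw [hDR]; nlinarith
  have hxR : (x:ℝ) = (q:ℝ) * (d:ℝ) + (r:ℝ) := by exact_mod_cast congrArg (Nat.cast (R := ℝ)) hxqr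
  have hrR : (r:ℝ) < (d:ℝ) := by exact_mod_cast hrd
  have hrR0 : (0:ℝ) ≤ (r:ℝ) := Nat.cast_nonneg r
  have hqR : (q:ℝ) + 1 ≤ (h:ℝ) := by exact_mod_cast hqh
  have hqR0 : (0:ℝ) ≤ (q:ℝ) := Nat.cast_nonneg q
  -- fract values
  have hfr1 : Int.fract ((x:ℝ) / ((d:ℝ) * (h:ℝ))) = (x:ℝ) / ((d:ℝ) * (h:ℝ)) := by
    apply Int.fract_eq_self.mpr
    constructor
    · positivity
    · rw [div_lt_one (by positivity)]
      exact_mod_cast hxlt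
  have hfr2 : Int.fract ((x:ℝ) / (d:ℝ)) = (r:ℝ) / (d:ℝ) := by
    have : (x:ℝ) / (d:ℝ) = (q:ℝ) + (r:ℝ) / (d:ℝ) := by
      rw [hxR]; field_simp
    rw [this]
    rw [show ((q:ℝ) + (r:ℝ)/(d:ℝ)) = (((q:ℤ)):ℝ) + (r:ℝ)/(d:ℝ) by push_cast; ring]
    rw [Int.fract_intCast_add]
    apply Int.fract_eq_self.mpr
    constructor
    · positivity
    · rw [div_lt_one hdR0]; exact hrR
  rw [hε, hfr1, hfr2]
  have hdne : (d:ℝ) ≠ 0 := ne_of_gt hdR0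
  have hhne : (h:ℝ) ≠ 0 := ne_of_gt hhR0
  have hDne : (D:ℝ) ≠ 0 := ne_of_gt hDR0
  have hLHS : (x:ℝ) / ((d:ℝ) * (h:ℝ))
      - (2 / (d:ℝ) + ((d:ℝ) - 2) / ((d:ℝ) * (h:ℝ))) * ((x:ℝ) / (D:ℝ))
      - (r:ℝ) / (d:ℝ) = ((q:ℝ) * ((d:ℝ) - 2) - (r:ℝ) * (h:ℝ)) / (D:ℝ) := by
    have h1 : (d:ℝ) * (h:ℝ) + (d:ℝ) - 2 ≠ 0 := by rw [← hDR]; exact hDne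
    rw [hxR]
    field_simp
    rw [hDR]
    ring
  rw [hLHS, show (d:ℝ) * (h:ℝ) + ((d:ℝ) - 2) = (D:ℝ) by rw [hDR]; ring]
  rw [div_lt_div_iff_of_pos_right hDR0]
  nlinarith [mul_le_mul_of_nonneg_right hqR (by linarith : (0:ℝ) ≤ (d:ℝ) - 2)]
end

section
/- Let d ≥ 2 be an even integer, h ≥ 1 an integer, D = d(h+1) − 2, and define ε : ℝ → ℝ by ε(x) = {x/(dh)} − (2/d + (d−2)/(dh))·(x/D) − {x/d}. Then for every even integer x with 0 ≤ x ≤ D−2 one has ε(x) < (dh−(d−2))/(dh+(d−2)). -/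
lemma myfloor_div (a b : ℕ) (hb : 0 < b) : ⌊(a : ℝ) / (b : ℝ)⌋ = (a / b : ℕ) := by
  have hb' : (0:ℝ) < b := by exact_mod_cast hb
  rw [Int.floor_eq_iff]
  constructor
  · rw [le_div_iff₀ hb']
    have := Nat.div_mul_le_self a b
    exact_mod_cast this
  · rw [div_lt_iff₀ hb']
    have h1 : a < (a / b + 1) * b := by
      have := Nat.div_add_mod a b
      have := Nat.mod_lt a hb
      nlinarith
    exact_mod_cast h1

/-- For even `d ≥ 2`, `h ≥ 1`, `D = d(h+1) - 2` and
`ε(x) = {x/(dh)} - (2/d + (d-2)/(dh))(x/D) - {x/d}`, for every even integer `x`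
with `0 ≤ x ≤ D - 2` one has `ε(x) < (dh - (d-2))/(dh + (d-2))`. -/
theorem stmt_12 (d h : ℕ) (hd : 2 ≤ d) (heven : Even d) (hh : 1 ≤ h)
    (D : ℕ) (hD : D = d * (h + 1) - 2) (ε : ℝ → ℝ)
    (hε : ∀ x : ℝ, ε x = Int.fract (x / ((d : ℝ) * (h : ℝ)))
        - (2 / (d : ℝ) + ((d : ℝ) - 2) / ((d : ℝ) * (h : ℝ))) * (x / (D : ℝ))
        - Int.fract (x / (d : ℝ))) :
    ∀ x : ℕ, Even x → x ≤ D - 2 →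
      ε (x : ℝ) < ((d : ℝ) * (h : ℝ) - ((d : ℝ) - 2)) / ((d : ℝ) * (h : ℝ) + ((d : ℝ) - 2)) := by
  intro x _ hx
  have hd0 : 0 < d := by omega
  have hh0 : 0 < h := hh
  have hdh0 : 0 < d * h := Nat.mul_pos hd0 hh0
  have hexp : d * (h + 1) = d * h + d := by ring
  have h4 : 4 ≤ d * (h + 1) := by
    have := Nat.mul_le_mul hd (show 2 ≤ h + 1 by omega)
    omega
  have hDval : D = d * h + d - 2 := by omega
  have hdh2 : 2 ≤ d * h + d := by omega
  have hxle : x ≤ d * h + d - 4 := by omega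
  have hD0 : 0 < D := by omega
  have hdR : (2:ℝ) ≤ (d:ℝ) := by exact_mod_cast hd
  have hhR : (1:ℝ) ≤ (h:ℝ) := by exact_mod_cast hh
  have hdR0 : (0:ℝ) < (d:ℝ) := by positivity
  have hhR0 : (0:ℝ) < (h:ℝ) := by exact_mod_cast hh0
  have hDR : (D:ℝ) = (d:ℝ) * h + d - 2 := by
    rw [hDval]
    push_cast [Nat.cast_sub hdh2]
    ring
  have hDR0 : (0:ℝ) < (D:ℝ) := by exact_mod_cast hD0
  set q1 := x / d with hq1
  set q2 := x / (d * h) with hq2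
  have f1 : ⌊(x : ℝ) / (d : ℝ)⌋ = (q1 : ℤ) := myfloor_div x d hd0
  have f2 : ⌊(x : ℝ) / ((d : ℝ) * (h : ℝ))⌋ = (q2 : ℤ) := by
    have := myfloor_div x (d * h) hdh0
    rw [← this]; push_cast; ring_nf
  -- division facts in ℕ
  have hx1 : d * q1 ≤ x := by
    have h := Nat.div_mul_le_self x d; rw [← hq1, Nat.mul_comm] at h; omega
  have hx1' : x < d * q1 + d := by
    have h := Nat.div_add_mod x d
    have h' := Nat.mod_lt x hd0
    rw [← hq1] at h; omega
  have hx2 : d * h * q2 ≤ x := by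
    have h := Nat.div_mul_le_self x (d * h); rw [← hq2, Nat.mul_comm] at h; omega
  have hq2le : q2 ≤ 1 := by
    have hdle : d ≤ d * h := Nat.le_mul_of_pos_right d hh0
    have h' : x / (d * h) < 2 := (Nat.div_lt_iff_lt_mul hdh0).mpr (by omega)
    rw [← hq2] at h'; omega
  -- key identity
  have key : ε x = (q1 : ℝ) - (q2 : ℝ) - (x : ℝ) * h / D := by
    rw [hε, Int.fract, Int.fract, f1, f2]
    push_cast
    field_simp
    rw [hDR]
    ring
  have htarget : (d : ℝ) * h + ((d:ℝ) - 2) = (D : ℝ) := by rw [hDR]; ring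
  have hxR0 : (0:ℝ) ≤ (x:ℝ) := Nat.cast_nonneg x
  -- main inequality
  have main : ((q1 : ℝ) - (q2 : ℝ)) * D < (x : ℝ) * h + ((d:ℝ) * h - d + 2) := by
    rw [hDR]
    interval_cases q2
    · -- q2 = 0, so x < d*h and q1 ≤ h - 1
      have hxlt : x < d * h := by
        by_contra hcon
        have h' : 1 ≤ x / (d * h) := (Nat.le_div_iff_mul_le hdh0).mpr (by omega)
        rw [← hq2] at h'; omega
      have hq1h : q1 + 1 ≤ h := by
        have h' : x / d < h := (Nat.div_lt_iff_lt_mul hd0).mpr (by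
          calc x < d * h := hxlt
          _ = h * d := by ring)
        rw [← hq1] at h'; omega
      have hq1hR : (q1:ℝ) + 1 ≤ (h:ℝ) := by exact_mod_cast hq1h
      have hx1R : (d:ℝ) * q1 ≤ (x:ℝ) := by exact_mod_cast hx1
      have hq1R0 : (0:ℝ) ≤ (q1:ℝ) := Nat.cast_nonneg q1
      push_cast
      nlinarith [mul_le_mul_of_nonneg_right hx1R (le_of_lt hhR0),
        mul_le_mul_of_nonneg_left hq1hR (by linarith : (0:ℝ) ≤ (d:ℝ) - 2)]
    · -- q2 = 1, so d*h ≤ x and q1 = h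
      have hge : d * h ≤ x := by omega
      have hq1eq : q1 = h := by
        have h1 : h ≤ x / d := (Nat.le_div_iff_mul_le hd0).mpr (by rw [Nat.mul_comm]; omega)
        have h2 : x / d < h + 1 := (Nat.div_lt_iff_lt_mul hd0).mpr (by
          have hexp2 : (h + 1) * d = d * h + d := by ring
          omega)
        rw [← hq1] at h1 h2; omega
      have hgeR : (d:ℝ) * h ≤ (x:ℝ) := by exact_mod_cast hge
      rw [hq1eq]
      push_cast
      nlinarith [mul_le_mul_of_nonneg_right hgeR (le_of_lt hhR0)]
  calc ε x = (q1 : ℝ) - (q2 : ℝ) - (x : ℝ) * h / D := key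
    _ = (((q1 : ℝ) - (q2 : ℝ)) * D - (x : ℝ) * h) / D := by field_simp
    _ < ((d:ℝ) * h - ((d:ℝ) - 2)) / D := by
        apply (div_lt_div_iff_of_pos_right hDR0).mpr
        linarith [main]
    _ = _ := by rw [htarget]
end

section
/- Let d ≥ 2 be an even integer, h ≥ 1 an integer, D = d(h+1) − 2, and let b : ℕ → ℕ be the sequence defined by: b_q = 0 if q is even or q ≤ d−2; b_q = ⌊(q−(d−1))/d⌋ + 1 if q is odd and d−1 ≤ q < d−1+(h−1)d; b_q = h+1 if q is odd and q = (d−1) + iD + jd for some integers i ≥ 1 and 0 ≤ j ≤ h−1; and b_q = h for all other odd q ≥ hd−1. Then for every even integer x ≥ 2 one has the strict inequality ∑ b_q < (h(h+1)d/(2D))·x, where the sum runs over all odd integers q with dh−1 ≤ q ≤ x + dh − 3. -/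
open Finset
open scoped Classical

lemma key_arith (d h D x : ℕ) (hd : 2 ≤ d) (hh : 1 ≤ h)
    (hD2 : D + 2 = d * (h + 1)) (hx : 2 ≤ x) :
    D * ∑ j ∈ range h, (x - 2 + j * d) / D < h * x := by
  have hDpos : 0 < D := by nlinarith
  obtain ⟨k, r, hrD, hxkr⟩ : ∃ k r, r < D ∧ x - 2 = D * k + r :=
    ⟨(x-2)/D, (x-2)%D, Nat.mod_lt _ hDpos, (Nat.div_add_mod _ _).symm⟩
  have hterm : ∀ j, (x - 2 + j * d) / D = k + (r + j * d) / D := by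
    intro j
    have h1 : x - 2 + j * d = D * k + (r + j * d) := by omega
    rw [h1, Nat.mul_add_div hDpos]
  have hsum : ∑ j ∈ range h, (x - 2 + j * d) / D
      = h * k + ∑ j ∈ range h, (r + j * d) / D := by
    simp only [hterm]
    rw [Finset.sum_add_distrib, Finset.sum_const, card_range, smul_eq_mul]
  obtain ⟨t, ht⟩ : ∃ t, ∑ j ∈ range h, (r + j * d) / D = t := ⟨_, rfl⟩
  rw [hsum, ht]
  have hle1 : ∀ j ∈ range h, (r + j * d) / D ≤ 1 := by
    intro j hj
    rw [mem_range] at hj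
    have hjd : j * d + d ≤ h * d := by
      calc j * d + d = (j+1) * d := by ring
        _ ≤ h * d := Nat.mul_le_mul_right d hj
    have hdh : h * d = d * h := mul_comm _ _
    have h2 : r + j * d < 2 * D := by nlinarith
    have h3 : (r + j * d) / D < 2 := (Nat.div_lt_iff_lt_mul hDpos).mpr h2
    omega
  have htleh : t ≤ h := by
    calc t = ∑ j ∈ range h, (r + j * d) / D := ht.symm
      _ ≤ ∑ _j ∈ range h, 1 := Finset.sum_le_sum hle1
      _ = h := by simp
  have main : D * t < h * (r + 2) := by
    rcases Nat.eq_zero_or_pos t with ht0 | ht0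
    · subst ht0
      have : 0 < h * (r + 2) := by positivity
      simpa using this
    · have hex : ∃ j, D ≤ r + j * d := by
        by_contra hc
        push_neg at hc
        have : t = 0 := by
          rw [← ht]
          exact Finset.sum_eq_zero fun j _ => Nat.div_eq_of_lt (hc j)
        omega
      have hspec : D ≤ r + Nat.find hex * d := Nat.find_spec hex
      have hmin : ∀ j < Nat.find hex, r + j * d < D := fun j hj => by
        have := Nat.find_min hex hj; omega
      have hj0h : Nat.find hex < h := by
        by_contra hc
        push_neg at hc
        have : t = 0 := by
          rw [← ht]
          refine Finset.sum_eq_zero fun j hj => ?_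
          rw [mem_range] at hj
          exact Nat.div_eq_of_lt (hmin j (by omega))
        omega
      have htub : t ≤ h - Nat.find hex := by
        have h1 : t ≤ ∑ j ∈ range h, (if Nat.find hex ≤ j then 1 else 0) := by
          rw [← ht]
          apply Finset.sum_le_sum
          intro j hj
          by_cases hjj : Nat.find hex ≤ j
          · simpa [hjj] using hle1 j hj
          · simp [hjj, Nat.div_eq_of_lt (hmin j (by omega))]
        have h2 : ∑ j ∈ range h, (if Nat.find hex ≤ j then (1:ℕ) else 0)
            = h - Nat.find hex := by
          have hf : (range h).filter (fun j => Nat.find hex ≤ j) = Ico (Nat.find hex) h := by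
            ext j
            simp only [mem_filter, mem_range, mem_Ico]
            omega
          rw [← Finset.card_filter, hf, Nat.card_Ico]
        omega
      have hj0u : Nat.find hex * d ≤ (h - t) * d :=
        Nat.mul_le_mul_right d (by omega)
      have htd : (t + 1) * d ≤ r + 2 := by
        have h1 : (h - t) + t = h := by omega
        have h2 : ((h - t) + t + 1) * d = (h-t)*d + t*d + d := by ring
        have h3 : d * (h + 1) = (h + 1) * d := mul_comm _ _
        have h4 : (h + 1) * d = (h-t)*d + t*d + d := by rw [← h2, h1]
        have h5 : (t+1)*d = t*d + d := by ring
        omega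
      have h5 : h * ((t+1)*d) ≤ h * (r + 2) := Nat.mul_le_mul_left h htd
      nlinarith [Nat.mul_le_mul_right d htleh]
  have hxeq : x = D * k + r + 2 := by omega
  calc D * (h * k + t) = h * (D * k) + D * t := by ring
    _ < h * (D * k) + h * (r + 2) := by omega
    _ = h * (D * k + r + 2) := by ring
    _ = h * x := by rw [← hxeq]

lemma card_odd_window (d h x : ℕ) (hd : 2 ≤ d) (heven : Even d) (hh : 1 ≤ h)
    (hxe : Even x) (hx2 : 2 ≤ x) :
    ((Finset.Icc (d * h - 1) (x + d * h - 3)).filter (fun q => Odd q)).card = x / 2 := by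
  have hdh0 : d * h % 2 = 0 := Nat.even_iff.mp (heven.mul_right h)
  have hdh2 : 2 ≤ d * h := le_trans hd (Nat.le_mul_of_pos_right d hh)
  have hx0 : x % 2 = 0 := Nat.even_iff.mp hxe
  have himg : (Finset.Icc (d * h - 1) (x + d * h - 3)).filter (fun q => Odd q)
      = (Finset.range (x / 2)).image (fun k => d * h - 1 + 2 * k) := by
    ext q
    simp only [mem_filter, mem_Icc, mem_image, mem_range, Nat.odd_iff]
    constructor
    · rintro ⟨⟨h1, h2⟩, h3⟩
      exact ⟨(q - (d * h - 1)) / 2, by omega, by omega⟩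
    · rintro ⟨k, hk, rfl⟩
      omega
  rw [himg, Finset.card_image_of_injective _ (fun a b hab => by omega), card_range]

-- bound on the number of "special" q in the window
lemma special_count (d h D x : ℕ) (hd : 2 ≤ d) (hh : 1 ≤ h)
    (hD2 : D + 2 = d * (h + 1)) (hx2 : 2 ≤ x) :
    (((Finset.Icc (d * h - 1) (x + d * h - 3)).filter (fun q => Odd q)).filter
        (fun q => ∃ i : ℕ, 1 ≤ i ∧ ∃ j : ℕ, j ≤ h - 1 ∧ q = (d - 1) + i * D + j * d)).card
      ≤ ∑ j ∈ range h, (x - 2 + j * d) / D := by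
  have hDpos : 0 < D := by nlinarith
  have hsub : (((Finset.Icc (d * h - 1) (x + d * h - 3)).filter (fun q => Odd q)).filter
        (fun q => ∃ i : ℕ, 1 ≤ i ∧ ∃ j : ℕ, j ≤ h - 1 ∧ q = (d - 1) + i * D + j * d))
      ⊆ (range h).biUnion (fun j =>
          (Finset.Icc 1 ((x + d * h - j * d - d - 2) / D)).image
            (fun i => (d - 1) + i * D + j * d)) := by
    intro q hq
    simp only [mem_filter, mem_Icc, mem_biUnion, mem_image, mem_range] at hq ⊢
    obtain ⟨⟨⟨hq1, hq2⟩, hqodd⟩, i, hi1, j, hjh, hqe⟩ := hq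
    refine ⟨j, by omega, i, ⟨hi1, ?_⟩, hqe.symm⟩
    have hjd : j * d + d ≤ d * h := by
      have := Nat.mul_le_mul_right d (show j + 1 ≤ h by omega)
      have hc : (j + 1) * d = j * d + d := by ring
      have hc2 : h * d = d * h := mul_comm _ _
      omega
    have hiD : i * D ≤ x + d * h - j * d - d - 2 := by omega
    exact le_trans ((Nat.le_div_iff_mul_le hDpos).mpr hiD) (le_refl _)
  calc _ ≤ ((range h).biUnion (fun j =>
          (Finset.Icc 1 ((x + d * h - j * d - d - 2) / D)).image
            (fun i => (d - 1) + i * D + j * d))).card := Finset.card_le_card hsub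
    _ ≤ ∑ j ∈ range h, ((Finset.Icc 1 ((x + d * h - j * d - d - 2) / D)).image
            (fun i => (d - 1) + i * D + j * d)).card := Finset.card_biUnion_le
    _ ≤ ∑ j ∈ range h, (x + d * h - j * d - d - 2) / D := by
        refine Finset.sum_le_sum fun j _ => ?_
        calc _ ≤ (Finset.Icc 1 ((x + d * h - j * d - d - 2) / D)).card :=
              Finset.card_image_le
          _ = (x + d * h - j * d - d - 2) / D := by rw [Nat.card_Icc, Nat.add_sub_cancel]
    _ = ∑ j ∈ range h, (x - 2 + j * d) / D := by
        rw [← Finset.sum_range_reflect]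
        refine Finset.sum_congr rfl fun j hj => ?_
        rw [mem_range] at hj
        congr 1
        have h1 : (h - 1 - j) * d = h * d - d - j * d := by
          rw [Nat.sub_mul, Nat.sub_mul, one_mul]
        have h2 : j * d + d ≤ h * d := by
          have := Nat.mul_le_mul_right d (show j + 1 ≤ h by omega)
          have hc : (j + 1) * d = j * d + d := by ring
          omega
        have hc2 : h * d = d * h := mul_comm _ _
        omega




open scoped Classical in
/-- For even `d ≥ 2`, `h ≥ 1`, `D = d(h+1) - 2` and the Betti number
sequence `b` of the free loop space pair of a space with cohomology `T_{d,h+1}(x)`,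
for every even integer `x ≥ 2` one has the strict inequality
`∑_{dh-1 ≤ q ≤ x+dh-3, q odd} b_q < (h(h+1)d/(2D))·x`. -/
theorem stmt_15 (d h : ℕ) (hd : 2 ≤ d) (heven : Even d) (hh : 1 ≤ h)
    (D : ℕ) (hD : D = d * (h + 1) - 2) (b : ℕ → ℕ)
    (hb : ∀ q : ℕ, b q =
      if Even q ∨ q ≤ d - 2 then 0
      else if d - 1 ≤ q ∧ q < d - 1 + (h - 1) * d then (q - (d - 1)) / d + 1
      else if ∃ i : ℕ, 1 ≤ i ∧ ∃ j : ℕ, j ≤ h - 1 ∧ q = (d - 1) + i * D + j * d then h + 1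
      else h) :
    ∀ x : ℕ, Even x → 2 ≤ x →
      ∑ q ∈ (Finset.Icc (d * h - 1) (x + d * h - 3)).filter (fun q => Odd q), (b q : ℝ)
        < ((h : ℝ) * ((h : ℝ) + 1) * (d : ℝ) / (2 * (D : ℝ))) * (x : ℝ) := by
  intro x hxe hx2
  have hD2 : D + 2 = d * (h + 1) := by
    have h1 : 2 + 2 ≤ d * (h + 1) := by nlinarith
    omega
  have hDpos : 0 < D := by
    have h1 : 2 * 2 ≤ d * (h + 1) := Nat.mul_le_mul hd (by omega)
    omega
  set S := (Finset.Icc (d * h - 1) (x + d * h - 3)).filter (fun q => Odd q) with hS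
  set Sp := fun q => ∃ i : ℕ, 1 ≤ i ∧ ∃ j : ℕ, j ≤ h - 1 ∧ q = (d - 1) + i * D + j * d with hSp
  -- evaluate b on S
  have hbS : ∀ q ∈ S, b q = h + (if Sp q then 1 else 0) := by
    intro q hq
    rw [hS, mem_filter, mem_Icc] at hq
    obtain ⟨⟨hq1, hq2⟩, hqodd⟩ := hq
    have hqne : ¬ Even q := by
      rw [Nat.even_iff]
      rw [Nat.odd_iff] at hqodd
      omega
    have hdh : d ≤ d * h := Nat.le_mul_of_pos_right d hh
    have hq3 : ¬ (Even q ∨ q ≤ d - 2) := by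
      push_neg
      exact ⟨hqne, by omega⟩
    have hhd : (h - 1) * d = h * d - d := by rw [Nat.sub_mul, one_mul]
    have hdhc : h * d = d * h := mul_comm _ _
    have hq4 : ¬ (d - 1 ≤ q ∧ q < d - 1 + (h - 1) * d) := by omega
    rw [hb q, if_neg hq3, if_neg hq4]
    by_cases hsp : Sp q
    · rw [hSp] at hsp; rw [if_pos hsp, if_pos hsp]
    · rw [hSp] at hsp; rw [if_neg hsp, if_neg hsp]; omega
  -- the natural-number sum
  have hsum : ∑ q ∈ S, b q = h * (x / 2) + (S.filter Sp).card := by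
    calc ∑ q ∈ S, b q = ∑ q ∈ S, (h + (if Sp q then 1 else 0)) :=
          Finset.sum_congr rfl hbS
      _ = h * S.card + ∑ q ∈ S, (if Sp q then 1 else 0) := by
          rw [Finset.sum_add_distrib, Finset.sum_const, smul_eq_mul, Nat.mul_comm S.card h]
      _ = h * (x / 2) + (S.filter Sp).card := by
          rw [card_odd_window d h x hd heven hh hxe hx2, ← Finset.card_filter]
  -- bound the special count
  have hN : (S.filter Sp).card * D < h * x := by
    have h1 := special_count d h D x hd hh hD2 hx2
    have h2 := key_arith d h D x hd hh hD2 hx2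
    calc (S.filter Sp).card * D ≤ (∑ j ∈ range h, (x - 2 + j * d) / D) * D :=
          Nat.mul_le_mul_right D h1
      _ = D * ∑ j ∈ range h, (x - 2 + j * d) / D := mul_comm _ _
      _ < h * x := h2
  -- natural-number inequality
  have hnat : (∑ q ∈ S, b q) * (2 * D) < h * (h + 1) * d * x := by
    have hx2' : x / 2 * 2 = x := Nat.div_mul_cancel hxe.two_dvd
    calc (∑ q ∈ S, b q) * (2 * D) = (h * (x / 2) + (S.filter Sp).card) * (2 * D) := by
          rw [hsum]
      _ = h * (x / 2 * 2) * D + 2 * ((S.filter Sp).card * D) := by ring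
      _ = h * x * D + 2 * ((S.filter Sp).card * D) := by rw [hx2']
      _ < h * x * D + 2 * (h * x) := by omega
      _ = h * (D + 2) * x := by ring
      _ = h * (d * (h + 1)) * x := by rw [hD2]
      _ = h * (h + 1) * d * x := by ring
  -- conclude over ℝ
  have h2D : (0 : ℝ) < 2 * (D : ℝ) := by positivity
  rw [div_mul_eq_mul_div, lt_div_iff₀ h2D]
  have hcast : ∑ q ∈ S, ((b q : ℝ)) = ((∑ q ∈ S, b q : ℕ) : ℝ) := by push_cast; rfl
  rw [hcast]
  exact_mod_cast hnat
end
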